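/- arXiv:2406.04923 — 7 statements merged into one kernel-verified Lean document; each statement's English description precedes it below -/
import Mathlib

section
/- Let G be a connected graph of order n ≥ 3 with p ≥ 1 vertices of degree 1. Then d(G) ≥ p. -/
open Finset in
/-- One stage of the deduction game.  The state is a pair `(P, F)` where `P` is the set of
protected vertices and `F` is the set of vertices whose initial searchers have already fired
(moved).  A vertex `v` is fireable if it is occupied, has not yet fired, and the number of
searchers on it (in the initial layout `L`) is at least its number of unprotected neighbours.
All fireable vertices fire simultaneously: one searcher moves to each unprotected neighbour,
which thereby becomes protected. -/
def dedStep {V : Type*} [Fintype V] [DecidableEq V] (G : SimpleGraph V) [DecidableRel G.Adj]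
    (L : V → ℕ) (s : Finset V × Finset V) : Finset V × Finset V :=
  let fire : Finset V := univ.filter (fun v =>
    0 < L v ∧ v ∉ s.2 ∧ (univ.filter (fun u => G.Adj v u ∧ u ∉ s.1)).card ≤ L v)
  (s.1 ∪ fire.biUnion (fun v => univ.filter (fun u => G.Adj v u ∧ u ∉ s.1)), s.2 ∪ fire)

open Finset in
/-- A layout `L` (assigning a number of searchers to each vertex) is successful if, starting
from the initially occupied vertices being protected and no vertex having fired, iterating the
deduction stages eventually protects every vertex. -/
def DedSuccessful {V : Type*} [Fintype V] [DecidableEq V] (G : SimpleGraph V)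
    [DecidableRel G.Adj] (L : V → ℕ) : Prop :=
  ∃ k : ℕ, ((dedStep G L)^[k] (univ.filter (fun v => 0 < L v), ∅)).1 = univ

/-- The deduction number of `G`: the minimum number of searchers in a successful layout. -/
noncomputable def deductionNumber {V : Type*} [Fintype V] (G : SimpleGraph V) : ℕ :=
  letI := Classical.decEq V
  letI := Classical.decRel G.Adj
  sInf {n | ∃ L : V → ℕ, (∑ v, L v) = n ∧ DedSuccessful G L}

/-!
A leaf that starts without a searcher can only be protected by its unique neighbour `u`
firing. Since `u` fires at a single step, all of the unoccupied leaves hanging at `u` are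
unprotected neighbours of `u` at that step, so there are at most `L u` of them. Charging every
leaf to itself if it is occupied and to its neighbour otherwise therefore charges each vertex
at most its number of searchers: an occupied leaf receives no further charge, because in a
connected graph with at least three vertices no two leaves are adjacent.
-/

open Finset

namespace SimpleGraph

variable {V : Type*} {G : SimpleGraph V}

lemma Walk.end_mem_of_forall_adj_mem {K : Set V} (hK : ∀ x ∈ K, ∀ y, G.Adj x y → y ∈ K)
    {a b : V} (p : G.Walk a b) (ha : a ∈ K) : b ∈ K := by
  induction p with
  | nil => exact ha
  | cons h _ ih => exact ih (hK _ ha _ h)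

variable [Fintype V] [DecidableRel G.Adj]

lemma Connected.not_adj_of_degree_eq_one (hconn : G.Connected) (h3 : 3 ≤ Fintype.card V)
    {u v : V} (hu : G.degree u = 1) (hv : G.degree v = 1) : ¬G.Adj u v := by
  intro huv
  have hK : ∀ x ∈ ({u, v} : Set V), ∀ y, G.Adj x y → y ∈ ({u, v} : Set V) := by
    rintro x (rfl | rfl) y hxy
    · exact .inr ((degree_eq_one_iff_existsUnique_adj.mp hu).unique hxy huv)
    · exact .inl ((degree_eq_one_iff_existsUnique_adj.mp hv).unique hxy huv.symm)
  have hall (w : V) : w ∈ ({u, v} : Set V) :=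
    (hconn.preconnected u w).elim fun p => p.end_mem_of_forall_adj_mem hK (.inl rfl)
  have : Fintype.card V ≤ 2 := by
    classical
    calc Fintype.card V = #(univ : Finset V) := card_univ.symm
      _ ≤ #{u, v} := card_le_card fun w _ => by simpa using hall w
      _ ≤ 2 := card_le_two
  omega

variable (G) in
lemma sum_card_filter_adj_eq_sum_degree (s : Finset V) :
    ∑ u, #{v ∈ s | G.Adj u v} = ∑ v ∈ s, G.degree v := by
  refine (sum_card_bipartiteAbove_eq_sum_card_bipartiteBelow (r := G.Adj)).trans
    (sum_congr rfl fun v _ => ?_)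
  simp only [bipartiteBelow, ← card_neighborFinset_eq_degree, neighborFinset_eq_filter, adj_comm]

end SimpleGraph

section DeductionGame

variable {V : Type*} [Fintype V] [DecidableEq V] (G : SimpleGraph V) [DecidableRel G.Adj]
  (L : V → ℕ)

def dedState (k : ℕ) : Finset V × Finset V :=
  (dedStep G L)^[k] (univ.filter fun v => 0 < L v, ∅)

lemma dedState_succ (k : ℕ) : dedState G L (k + 1) = dedStep G L (dedState G L k) :=
  Function.iterate_succ_apply' _ _ _

lemma monotone_dedState_snd : Monotone fun k => (dedState G L k).2 :=
  monotone_nat_of_le_succ fun k => by rw [dedState_succ]; exact subset_union_left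

def Fires (k : ℕ) (u : V) : Prop :=
  u ∉ (dedState G L k).2 ∧ u ∈ (dedState G L (k + 1)).2

lemma dedSuccessful_one : DedSuccessful G fun _ => 1 :=
  ⟨0, by simp⟩

lemma deductionNumber_eq_sInf :
    deductionNumber G = sInf {n | ∃ L : V → ℕ, ∑ v, L v = n ∧ DedSuccessful G L} := by
  unfold deductionNumber
  congr!

variable {G L}

lemma Fires.eq {k k' : ℕ} {u : V} (h : Fires G L k u) (h' : Fires G L k' u) : k = k' := by
  by_contra hne
  rcases Nat.lt_or_gt_of_ne hne with hlt | hlt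
  · exact h'.1 (monotone_dedState_snd G L hlt h.2)
  · exact h.1 (monotone_dedState_snd G L hlt h'.2)

lemma Fires.card_le {k : ℕ} {u : V} (h : Fires G L k u) :
    #{w | G.Adj u w ∧ w ∉ (dedState G L k).1} ≤ L u := by
  have h2 := h.2
  rw [dedState_succ] at h2
  simp only [dedStep, mem_union, mem_filter, mem_univ, true_and] at h2
  exact (h2.resolve_left h.1).2.2

lemma exists_adj_fires_of_mem_dedState_succ {k : ℕ} {v : V}
    (h : v ∉ (dedState G L k).1) (h' : v ∈ (dedState G L (k + 1)).1) :
    ∃ u, G.Adj u v ∧ Fires G L k u := by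
  rw [dedState_succ] at h'
  simp only [dedStep, mem_union, mem_biUnion, mem_filter, mem_univ, true_and] at h'
  obtain ⟨u, hu, huv, -⟩ := h'.resolve_left h
  refine ⟨u, huv, hu.2.1, ?_⟩
  rw [dedState_succ]
  simp only [dedStep, mem_union, mem_filter, mem_univ, true_and]
  exact .inr hu

lemma DedSuccessful.exists_mem_dedState (hL : DedSuccessful G L) (v : V) :
    ∃ k, v ∈ (dedState G L k).1 := by
  obtain ⟨k, hk⟩ := hL
  exact ⟨k, by simp [dedState, hk]⟩

lemma DedSuccessful.card_pendant_unoccupied_le (hL : DedSuccessful G L) (u : V) :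
    #{v | G.Adj u v ∧ G.degree v = 1 ∧ L v = 0} ≤ L u := by
  have hfires : ∀ v ∈ ({v | G.Adj u v ∧ G.degree v = 1 ∧ L v = 0} : Finset V),
      ∃ k, v ∉ (dedState G L k).1 ∧ Fires G L k u := by
    intro v hv
    simp only [mem_filter, mem_univ, true_and] at hv
    obtain ⟨huv, hv1, hLv⟩ := hv
    obtain ⟨k, hk, hk'⟩ := Nat.exists_not_and_succ_of_not_zero_of_exists
      (p := fun k => v ∈ (dedState G L k).1) (by simp [dedState, hLv]) (hL.exists_mem_dedState v)
    obtain ⟨w, hwv, hw⟩ := exists_adj_fires_of_mem_dedState_succ hk hk'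
    obtain rfl : w = u :=
      (SimpleGraph.degree_eq_one_iff_existsUnique_adj.mp hv1).unique hwv.symm huv.symm
    exact ⟨k, hk, hw⟩
  rcases eq_empty_or_nonempty ({v | G.Adj u v ∧ G.degree v = 1 ∧ L v = 0} : Finset V)
    with hempty | ⟨v₀, hv₀⟩
  · simp [hempty]
  obtain ⟨k, -, hk⟩ := hfires v₀ hv₀
  refine le_trans (card_le_card fun v hv => ?_) hk.card_le
  obtain ⟨m, hm, hm'⟩ := hfires v hv
  obtain rfl := hk.eq hm'
  simp only [mem_filter, mem_univ, true_and] at hv ⊢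
  exact ⟨hv.1, hm⟩

theorem DedSuccessful.card_degree_eq_one_le_sum (hconn : G.Connected)
    (h3 : 3 ≤ Fintype.card V) (hL : DedSuccessful G L) :
    #{v | G.degree v = 1} ≤ ∑ v, L v := by
  have hcharge (u : V) : (if G.degree u = 1 ∧ 0 < L u then 1 else 0) +
      #{v | G.Adj u v ∧ G.degree v = 1 ∧ L v = 0} ≤ L u := by
    split_ifs with hu
    · have : ({v | G.Adj u v ∧ G.degree v = 1 ∧ L v = 0} : Finset V) = ∅ :=
        filter_false_of_mem fun v _ h => hconn.not_adj_of_degree_eq_one h3 hu.1 h.2.1 h.1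
      simp only [this, card_empty, add_zero]
      exact hu.2
    · simpa using hL.card_pendant_unoccupied_le u
  calc #{v | G.degree v = 1}
      = #{v | G.degree v = 1 ∧ 0 < L v} + #{v | G.degree v = 1 ∧ L v = 0} := by
        rw [← card_filter_add_card_filter_not (s := {v | G.degree v = 1}) (0 < L ·)]
        simp only [filter_filter, not_lt, Nat.le_zero]
    _ = ∑ u, ((if G.degree u = 1 ∧ 0 < L u then 1 else 0) +
          #{v | G.Adj u v ∧ G.degree v = 1 ∧ L v = 0}) := by
        rw [sum_add_distrib, sum_boole, Nat.cast_id]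
        congr 1
        rw [card_eq_sum_ones, ← sum_congr rfl fun v hv => (mem_filter.1 hv).2.1,
          ← G.sum_card_filter_adj_eq_sum_degree]
        simp only [filter_filter, and_comm]
    _ ≤ ∑ u, L u := sum_le_sum fun u _ => hcharge u

end DeductionGame

theorem deduction_ge_num_leaves_general {V : Type*} [Fintype V] [DecidableEq V]
    (G : SimpleGraph V) [DecidableRel G.Adj] (hconn : G.Connected)
    (h3 : 3 ≤ Fintype.card V) (p : ℕ)
    (hp : (Finset.univ.filter (fun v => G.degree v = 1)).card = p) :
    p ≤ deductionNumber G := by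
  rw [deductionNumber_eq_sInf, ← hp]
  refine le_csInf ⟨_, fun _ => 1, rfl, dedSuccessful_one G⟩ ?_
  rintro n ⟨L, rfl, hL⟩
  exact hL.card_degree_eq_one_le_sum hconn h3

theorem deduction_ge_num_leaves {V : Type*} [Fintype V] [DecidableEq V]
    (G : SimpleGraph V) [DecidableRel G.Adj] (hconn : G.Connected)
    (h3 : 3 ≤ Fintype.card V) (p : ℕ)
    (hp : (Finset.univ.filter (fun v => G.degree v = 1)).card = p) (hp1 : 1 ≤ p) :
    p ≤ deductionNumber G :=
  deduction_ge_num_leaves_general G hconn h3 p hp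
end

section
/- For every graph G, there exists a successful standard layout (a layout with at most one searcher per vertex) using exactly d(G) searchers. -/
/-! Given a successful layout `L`, let every occupied vertex keep a single searcher and, for every
vertex `v` that fires, place one searcher from the start on all but one of the `d` unprotected
neighbours it protects when it fires. Since `d ≤ L v`, this costs at most `L v` searchers at `v`.
The new game runs ahead of the old one: whenever `v` fires in the old game, at most one of its
neighbours is still unprotected in the new game, so its single searcher suffices. -/

namespace DeductionGame

open Finset

lemma card_filter_pos_add_sum_sub_one {ι : Type*} (s : Finset ι) (f : ι → ℕ) :
    #(s.filter fun i => 0 < f i) + ∑ i ∈ s, (f i - 1) = ∑ i ∈ s, f i := by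
  rw [card_filter, ← sum_add_distrib]
  exact sum_congr rfl fun i _ => by split_ifs <;> omega

variable {V : Type*} [Fintype V] [DecidableEq V] (G : SimpleGraph V) [DecidableRel G.Adj]

def unprotectedNeighbors (P : Finset V) (v : V) : Finset V :=
  univ.filter (fun u => G.Adj v u ∧ u ∉ P)

def fireable (L : V → ℕ) (s : Finset V × Finset V) : Finset V :=
  univ.filter (fun v => 0 < L v ∧ v ∉ s.2 ∧ #(unprotectedNeighbors G s.1 v) ≤ L v)

def state (L : V → ℕ) (k : ℕ) : Finset V × Finset V :=
  (dedStep G L)^[k] (univ.filter (fun v => 0 < L v), ∅)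

variable {G}

lemma dedStep_eq (L : V → ℕ) (s : Finset V × Finset V) :
    dedStep G L s =
      (s.1 ∪ (fireable G L s).biUnion (unprotectedNeighbors G s.1), s.2 ∪ fireable G L s) :=
  rfl

@[simp] lemma state_zero (L : V → ℕ) : state G L 0 = (univ.filter (fun v => 0 < L v), ∅) :=
  rfl

lemma state_succ (L : V → ℕ) (k : ℕ) : state G L (k + 1) = dedStep G L (state G L k) :=
  Function.iterate_succ_apply' _ _ _

lemma mem_unprotectedNeighbors {P : Finset V} {v u : V} :
    u ∈ unprotectedNeighbors G P v ↔ G.Adj v u ∧ u ∉ P := by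
  simp [unprotectedNeighbors]

lemma mem_fireable {L : V → ℕ} {s : Finset V × Finset V} {v : V} :
    v ∈ fireable G L s ↔ 0 < L v ∧ v ∉ s.2 ∧ #(unprotectedNeighbors G s.1 v) ≤ L v := by
  simp [fireable]

lemma unprotectedNeighbors_anti {P Q : Finset V} (h : P ⊆ Q) (v : V) :
    unprotectedNeighbors G Q v ⊆ unprotectedNeighbors G P v := fun _ hu => by
  rw [mem_unprotectedNeighbors] at hu ⊢
  exact ⟨hu.1, fun hP => hu.2 (h hP)⟩

lemma state_fst_mono (L : V → ℕ) : Monotone fun k => (state G L k).1 :=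
  monotone_nat_of_le_succ fun k => by
    simp only [state_succ, dedStep_eq]
    exact subset_union_left

lemma state_snd_mono (L : V → ℕ) : Monotone fun k => (state G L k).2 :=
  monotone_nat_of_le_succ fun k => by
    simp only [state_succ, dedStep_eq]
    exact subset_union_left

lemma fireable_subset_state_succ_snd (L : V → ℕ) (k : ℕ) :
    fireable G L (state G L k) ⊆ (state G L (k + 1)).2 := by
  rw [state_succ, dedStep_eq]
  exact subset_union_right

lemma eq_of_mem_fireable_of_mem_fireable {L : V → ℕ} {v : V} {j k : ℕ}
    (hj : v ∈ fireable G L (state G L j)) (hk : v ∈ fireable G L (state G L k)) : j = k := by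
  have not_fired_later {j k : ℕ} (hj : v ∈ fireable G L (state G L j))
      (hk : v ∈ fireable G L (state G L k)) : ¬ j < k := fun hjk =>
    (mem_fireable.mp hk).2.1 (state_snd_mono L hjk (fireable_subset_state_succ_snd L j hj))
  exact le_antisymm (not_lt.mp (not_fired_later hk hj)) (not_lt.mp (not_fired_later hj hk))

lemma mem_state_fst_of_adj_of_mem_state_snd (L : V → ℕ) :
    ∀ k {w x : V}, w ∈ (state G L k).2 → G.Adj w x → x ∈ (state G L k).1
  | 0, _, _, hw, _ => by simp at hw
  | k + 1, w, x, hw, hwx => by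
    rw [state_succ, dedStep_eq] at hw ⊢
    rcases mem_union.mp hw with hw | hw
    · exact mem_union_left _ (mem_state_fst_of_adj_of_mem_state_snd L k hw hwx)
    · by_cases hx : x ∈ (state G L k).1
      · exact mem_union_left _ hx
      · exact mem_union_right _ (mem_biUnion.mpr ⟨w, hw, mem_unprotectedNeighbors.mpr ⟨hwx, hx⟩⟩)

/-- A vertex firing under `L` at stage `j` has, under `L'`, either fired already or become
fireable at the same stage. -/
lemma state_subset_of_dominates {L L' : V → ℕ} {A : Finset V} {K : ℕ}
    (hocc : ∀ w, 0 < L w ∨ w ∈ A → 0 < L' w)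
    (hcap : ∀ j < K, ∀ w ∈ fireable G L (state G L j),
      #(unprotectedNeighbors G ((state G L j).1 ∪ A) w) ≤ L' w) :
    ∀ k ≤ K, (state G L k).1 ∪ A ⊆ (state G L' k).1 ∧ (state G L k).2 ⊆ (state G L' k).2
  | 0, _ => by
    refine ⟨union_subset ?_ ?_, by simp⟩ <;> intro w hw
    · simpa using hocc w (Or.inl (by simpa using hw))
    · simpa using hocc w (Or.inr hw)
  | k + 1, hk => by
    obtain ⟨hP, hF⟩ := state_subset_of_dominates hocc hcap k (by omega)
    have hF' : (state G L (k + 1)).2 ⊆ (state G L' (k + 1)).2 := by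
      rw [state_succ, state_succ, dedStep_eq, dedStep_eq]
      intro w hw
      rcases mem_union.mp hw with hw | hw
      · exact mem_union_left _ (hF hw)
      by_cases hw' : w ∈ (state G L' k).2
      · exact mem_union_left _ hw'
      obtain ⟨hpos, -, -⟩ := mem_fireable.mp hw
      refine mem_union_right _ (mem_fireable.mpr ⟨hocc w (Or.inl hpos), hw', ?_⟩)
      exact (card_le_card (unprotectedNeighbors_anti hP w)).trans (hcap k (by omega) w hw)
    refine ⟨union_subset ?_ ((subset_union_right.trans hP).trans (state_fst_mono L' k.le_succ)),
      hF'⟩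
    rw [state_succ, dedStep_eq]
    refine union_subset ((subset_union_left.trans hP).trans (state_fst_mono L' k.le_succ)) ?_
    intro x hx
    obtain ⟨w, hw, hwx⟩ := mem_biUnion.mp hx
    exact mem_state_fst_of_adj_of_mem_state_snd L' (k + 1)
      (hF' (fireable_subset_state_succ_snd L k hw)) (mem_unprotectedNeighbors.mp hwx).1

lemma dedSuccessful_of_dominates {L L' : V → ℕ} {A : Finset V} {K : ℕ}
    (hK : (state G L K).1 = univ) (hocc : ∀ w, 0 < L w ∨ w ∈ A → 0 < L' w)
    (hcap : ∀ j < K, ∀ w ∈ fireable G L (state G L j),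
      #(unprotectedNeighbors G ((state G L j).1 ∪ A) w) ≤ L' w) :
    DedSuccessful G L' := by
  have h := (state_subset_of_dominates hocc hcap K le_rfl).1
  rw [hK] at h
  exact ⟨K, univ_subset_iff.mp (subset_union_left.trans h)⟩

lemma card_filter_mem_fireable_le_one (L : V → ℕ) (K : ℕ) (v : V) :
    #((range K).filter fun j => v ∈ fireable G L (state G L j)) ≤ 1 :=
  card_le_one.mpr fun _ hj _ hk =>
    eq_of_mem_fireable_of_mem_fireable (mem_filter.mp hj).2 (mem_filter.mp hk).2

-- A vertex fires at most once.
lemma sum_sum_fireable_le {L : V → ℕ} (K : ℕ) (c : ℕ → V → ℕ)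
    (hc : ∀ j v, v ∈ fireable G L (state G L j) → c j v ≤ L v - 1) :
    ∑ j ∈ range K, ∑ v ∈ fireable G L (state G L j), c j v ≤ ∑ v, (L v - 1) := by
  rw [sum_comm' (t' := univ)
    (s' := fun v => (range K).filter fun j => v ∈ fireable G L (state G L j)) (by simp)]
  gcongr with v
  calc ∑ j ∈ (range K).filter (fun j => v ∈ fireable G L (state G L j)), c j v
      ≤ #((range K).filter fun j => v ∈ fireable G L (state G L j)) • (L v - 1) :=
        sum_le_card_nsmul _ _ _ fun j hj => hc j v (mem_filter.mp hj).2
    _ ≤ L v - 1 := by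
        rw [smul_eq_mul]
        exact mul_le_of_le_one_left (Nat.zero_le _) (card_filter_mem_fireable_le_one L K v)

theorem exists_standard_sum_le_of_dedSuccessful {L : V → ℕ} (hL : DedSuccessful G L) :
    ∃ L' : V → ℕ, (∀ v, L' v ≤ 1) ∧ DedSuccessful G L' ∧ ∑ v, L' v ≤ ∑ v, L v := by
  obtain ⟨K, hK⟩ := hL
  choose T hTsub hTcard using fun j v =>
    exists_subset_card_eq (Nat.sub_le #(unprotectedNeighbors G (state G L j).1 v) 1)
  set A := (range K).biUnion fun j => (fireable G L (state G L j)).biUnion (T j)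
  set S := univ.filter (fun v => 0 < L v) ∪ A
  refine ⟨fun v => if v ∈ S then 1 else 0, fun v => by dsimp only; split_ifs <;> simp, ?_, ?_⟩
  · refine dedSuccessful_of_dominates (A := A) hK (fun w hw => by simp [S, hw]) ?_
    intro j hj w hw
    have hS : w ∈ S := mem_union_left _ (by simpa using (mem_fireable.mp hw).1)
    have hTA : T j w ⊆ A := fun x hx =>
      mem_biUnion.mpr ⟨j, mem_range.mpr hj, mem_biUnion.mpr ⟨w, hw, hx⟩⟩
    calc #(unprotectedNeighbors G ((state G L j).1 ∪ A) w)
        ≤ #(unprotectedNeighbors G (state G L j).1 w \ T j w) := by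
          refine card_le_card fun x hx => ?_
          rw [mem_unprotectedNeighbors, mem_union, not_or] at hx
          exact mem_sdiff.mpr
            ⟨mem_unprotectedNeighbors.mpr ⟨hx.1, hx.2.1⟩, fun h => hx.2.2 (hTA h)⟩
      _ ≤ 1 := by rw [card_sdiff_of_subset (hTsub j w), hTcard]; omega
      _ = _ := by simp [hS]
  · calc ∑ v, (if v ∈ S then 1 else 0)
        = #S := by simp
      _ ≤ #(univ.filter fun v => 0 < L v) + #A := card_union_le _ _
      _ ≤ #(univ.filter fun v => 0 < L v) +
            ∑ j ∈ range K, ∑ v ∈ fireable G L (state G L j), #(T j v) := by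
          gcongr
          exact card_biUnion_le.trans (sum_le_sum fun j _ => card_biUnion_le)
      _ ≤ #(univ.filter fun v => 0 < L v) + ∑ v, (L v - 1) := by
          gcongr
          refine sum_sum_fireable_le K _ fun j v hv => ?_
          rw [hTcard]
          exact Nat.sub_le_sub_right (mem_fireable.mp hv).2.2 1
      _ = ∑ v, L v := card_filter_pos_add_sum_sub_one univ L

end DeductionGame

theorem exists_standard_successful_layout {V : Type*} [Fintype V] [DecidableEq V]
    (G : SimpleGraph V) [DecidableRel G.Adj] :
    ∃ L : V → ℕ, (∀ v, L v ≤ 1) ∧ DedSuccessful G L ∧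
      (∑ v, L v) = deductionNumber G := by
  have hd : deductionNumber G = sInf {n | ∃ L : V → ℕ, (∑ v, L v) = n ∧ DedSuccessful G L} := by
    unfold deductionNumber
    congr!
  have hne : {n | ∃ L : V → ℕ, (∑ v, L v) = n ∧ DedSuccessful G L}.Nonempty :=
    ⟨_, fun _ => 1, rfl, 0, by simp⟩
  obtain ⟨L, hLsum, hL⟩ := Nat.sInf_mem hne
  obtain ⟨L', hstd, hL', hle⟩ := DeductionGame.exists_standard_sum_le_of_dedSuccessful hL
  refine ⟨L', hstd, hL', le_antisymm (hle.trans_eq (hLsum.trans hd.symm)) ?_⟩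
  rw [hd]
  exact Nat.sInf_le ⟨L', rfl, hL'⟩
end

section
/- Let G be a connected graph with a cut-vertex u, and let G_1, …, G_t be the connected components of G − u. Then d(G) ≤ 1 + Σ_{i=1}^t d(G_i). -/
open Finset

lemma dedStep_def {V : Type*} [Fintype V] [DecidableEq V] (G : SimpleGraph V)
    [DecidableRel G.Adj] (L : V → ℕ) (s : Finset V × Finset V) :
    dedStep G L s =
      (s.1 ∪ (univ.filter (fun v =>
          0 < L v ∧ v ∉ s.2 ∧ (univ.filter (fun u => G.Adj v u ∧ u ∉ s.1)).card ≤ L v)).biUnion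
            (fun v => univ.filter (fun u => G.Adj v u ∧ u ∉ s.1)),
       s.2 ∪ univ.filter (fun v =>
          0 < L v ∧ v ∉ s.2 ∧ (univ.filter (fun u => G.Adj v u ∧ u ∉ s.1)).card ≤ L v)) := rfl

lemma dedStep_fst_subset {V : Type*} [Fintype V] [DecidableEq V] (G : SimpleGraph V)
    [DecidableRel G.Adj] (L : V → ℕ) (s : Finset V × Finset V) :
    s.1 ⊆ (dedStep G L s).1 := subset_union_left

lemma iter_fst_mono {V : Type*} [Fintype V] [DecidableEq V] (G : SimpleGraph V)
    [DecidableRel G.Adj] (L : V → ℕ) (s : Finset V × Finset V) {k l : ℕ} (h : k ≤ l) :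
    ((dedStep G L)^[k] s).1 ⊆ ((dedStep G L)^[l] s).1 := by
  induction l, h using Nat.le_induction with
  | base => exact subset_rfl
  | succ l hl ih =>
    rw [Function.iterate_succ_apply']
    exact ih.trans (dedStep_fst_subset G L _)

lemma ded_nonempty {V : Type*} [Fintype V] [DecidableEq V] (G : SimpleGraph V)
    [DecidableRel G.Adj] :
    {n | ∃ L : V → ℕ, (∑ v, L v) = n ∧ DedSuccessful G L}.Nonempty := by
  refine ⟨_, fun _ => 1, rfl, 0, ?_⟩
  simp

lemma dedSuccessful_irrel {V : Type*} {f1 f2 : Fintype V} {d1 d2 : DecidableEq V}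
    (G : SimpleGraph V) {r1 r2 : DecidableRel G.Adj} (L : V → ℕ)
    (h : @DedSuccessful V f1 d1 G r1 L) : @DedSuccessful V f2 d2 G r2 L := by
  obtain rfl : f1 = f2 := Subsingleton.elim _ _
  obtain rfl : d1 = d2 := Subsingleton.elim _ _
  obtain rfl : r1 = r2 := Subsingleton.elim _ _
  exact h

lemma deductionNumber_eq {V : Type*} [Fintype V] [DecidableEq V] (G : SimpleGraph V)
    [DecidableRel G.Adj] :
    deductionNumber G = sInf {n | ∃ L : V → ℕ, (∑ v, L v) = n ∧ DedSuccessful G L} := by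
  unfold deductionNumber
  congr 1
  ext n
  exact exists_congr fun L => and_congr_right fun _ =>
    ⟨fun h => dedSuccessful_irrel G L h, fun h => dedSuccessful_irrel G L h⟩

lemma sim {U V : Type*} [Fintype V] [DecidableEq V] [Fintype U] [DecidableEq U]
    (G : SimpleGraph V) [DecidableRel G.Adj] (GU : SimpleGraph U) [DecidableRel GU.Adj]
    (f : U → V)
    (hadj : ∀ x y, GU.Adj x y ↔ G.Adj (f x) (f y))
    (L : V → ℕ) (LU : U → ℕ) (hL : ∀ x, L (f x) = LU x)
    (hout : ∀ x w, G.Adj (f x) w → w ∉ Set.range f → 0 < L w) (k : ℕ) :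
    (∀ x, x ∈ ((dedStep GU LU)^[k] (univ.filter fun v => 0 < LU v, ∅)).1 →
      f x ∈ ((dedStep G L)^[k] (univ.filter fun v => 0 < L v, ∅)).1) ∧
    (∀ x, f x ∈ ((dedStep G L)^[k] (univ.filter fun v => 0 < L v, ∅)).2 →
      ∀ y, GU.Adj x y → f y ∈ ((dedStep G L)^[k] (univ.filter fun v => 0 < L v, ∅)).1) := by
  induction k with
  | zero =>
    constructor
    · intro x hx
      simp only [Function.iterate_zero_apply, mem_filter, mem_univ, true_and] at hx ⊢
      rw [hL]; exact hx
    · intro x hx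
      simp only [Function.iterate_zero_apply, notMem_empty] at hx
  | succ k ih =>
    obtain ⟨ihP, ihF⟩ := ih
    rw [Function.iterate_succ_apply', Function.iterate_succ_apply']
    set sU := (dedStep GU LU)^[k] (univ.filter fun v => 0 < LU v, ∅) with hsU
    set sG := (dedStep G L)^[k] (univ.filter fun v => 0 < L v, ∅) with hsG
    have h0 : (univ.filter fun v => 0 < L v) ⊆ sG.1 := by
      have := iter_fst_mono G L (univ.filter fun v => 0 < L v, ∅) (Nat.zero_le k)
      simpa using this
    constructor
    · intro x hx
      rw [dedStep_def] at hx ⊢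
      simp only [mem_union, mem_biUnion, mem_filter, mem_univ, true_and] at hx
      rcases hx with hx | ⟨y, ⟨hy1, hy2, hy3⟩, hadjyx, hxP⟩
      · exact mem_union_left _ (ihP x hx)
      · by_cases hfy : f y ∈ sG.2
        · exact mem_union_left _ (ihF y hfy x hadjyx)
        · by_cases hfx : f x ∈ sG.1
          · exact mem_union_left _ hfx
          · apply mem_union_right
            refine mem_biUnion.2 ⟨f y, ?_, ?_⟩
            · simp only [mem_filter, mem_univ, true_and]
              refine ⟨by rw [hL]; exact hy1, hfy, ?_⟩
              calc (univ.filter fun w => G.Adj (f y) w ∧ w ∉ sG.1).card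
                  ≤ ((univ.filter fun z => GU.Adj y z ∧ z ∉ sU.1).image f).card := by
                    apply card_le_card
                    intro w hw
                    simp only [mem_filter, mem_univ, true_and] at hw
                    obtain ⟨hadjw, hwP⟩ := hw
                    by_cases hwr : w ∈ Set.range f
                    · obtain ⟨z, rfl⟩ := hwr
                      refine mem_image.2 ⟨z, ?_, rfl⟩
                      simp only [mem_filter, mem_univ, true_and]
                      exact ⟨(hadj y z).2 hadjw, fun hz => hwP (ihP z hz)⟩
                    · exact absurd (h0 (mem_filter.2 ⟨mem_univ _, hout y w hadjw hwr⟩)) hwP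
                _ ≤ (univ.filter fun z => GU.Adj y z ∧ z ∉ sU.1).card := card_image_le
                _ ≤ LU y := hy3
                _ = L (f y) := (hL y).symm
            · simp only [mem_filter, mem_univ, true_and]
              exact ⟨(hadj y x).1 hadjyx, hfx⟩
    · intro x hx y hxy
      rw [dedStep_def] at hx ⊢
      simp only [mem_union, mem_filter, mem_univ, true_and] at hx
      rcases hx with hx | ⟨hx1, hx2, hx3⟩
      · exact mem_union_left _ (ihF x hx y hxy)
      · by_cases hfy : f y ∈ sG.1
        · exact mem_union_left _ hfy
        · apply mem_union_right
          refine mem_biUnion.2 ⟨f x, ?_, ?_⟩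
          · simp only [mem_filter, mem_univ, true_and]
            exact ⟨hx1, hx2, hx3⟩
          · simp only [mem_filter, mem_univ, true_and]
            exact ⟨(hadj x y).1 hxy, hfy⟩

theorem deduction_cut_vertex {V : Type*} [Fintype V] (G : SimpleGraph V) (u : V)
    (hG : G.Connected) (hcut : ¬ (G.induce ({u}ᶜ : Set V)).Connected) :
    letI : Fintype (G.induce ({u}ᶜ : Set V)).ConnectedComponent := Fintype.ofFinite _
    deductionNumber G ≤ 1 + ∑ c : (G.induce ({u}ᶜ : Set V)).ConnectedComponent,
      (letI : Fintype c.supp := Fintype.ofFinite _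
       deductionNumber ((G.induce ({u}ᶜ : Set V)).induce c.supp)) := by
  classical
  letI : Fintype (↥({u}ᶜ : Set V)) := Fintype.ofFinite _
  set H : SimpleGraph (↥({u}ᶜ : Set V)) := G.induce ({u}ᶜ : Set V) with hH
  letI : Fintype H.ConnectedComponent := Fintype.ofFinite _
  letI : DecidableRel G.Adj := Classical.decRel _
  letI : DecidableRel H.Adj := Classical.decRel _
  letI instc : ∀ c : H.ConnectedComponent, Fintype ↥c.supp := fun _ => Fintype.ofFinite _
  letI : ∀ c : H.ConnectedComponent, DecidableRel ((H.induce c.supp).Adj) :=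
    fun _ => Classical.decRel _
  have hLc : ∀ c : H.ConnectedComponent, ∃ L : ↥c.supp → ℕ,
      (∑ x, L x) = deductionNumber (H.induce c.supp) ∧ DedSuccessful (H.induce c.supp) L := by
    intro c
    obtain ⟨L, h1, h2⟩ := Nat.sInf_mem (ded_nonempty (H.induce c.supp))
    exact ⟨L, h1.trans (deductionNumber_eq _).symm, h2⟩
  choose Lc hsumc hsuccc using hLc
  let ι : ∀ c : H.ConnectedComponent, ↥c.supp → V := fun c x => ((x : ↥({u}ᶜ : Set V)) : V)
  have hinj : ∀ c, Function.Injective (ι c) := fun c a b h => Subtype.ext (Subtype.ext h)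
  have hne : ∀ (c : H.ConnectedComponent) (x : ↥c.supp), ι c x ≠ u := fun c x =>
    Set.mem_compl_singleton_iff.mp (x : ↥({u}ᶜ : Set V)).2
  have hccm : ∀ (c : H.ConnectedComponent) (x : ↥c.supp), H.connectedComponentMk (x : ↥({u}ᶜ : Set V)) = c :=
    fun c x => (SimpleGraph.ConnectedComponent.mem_supp_iff _ _).1 x.2
  have hcompeq : ∀ (c c' : H.ConnectedComponent) (x : ↥c.supp) (x' : ↥c'.supp),
      ι c x = ι c' x' → c = c' := by
    intro c c' x x' h
    have h2 : (x : ↥({u}ᶜ : Set V)) = (x' : ↥({u}ᶜ : Set V)) := Subtype.ext h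
    rw [← hccm c x, ← hccm c' x', h2]
  let Lext : H.ConnectedComponent → V → ℕ :=
    fun c v => ∑ x : ↥c.supp, if ι c x = v then Lc c x else 0
  let L : V → ℕ := fun v => (if v = u then 1 else 0) + ∑ c, Lext c v
  have hLextu : ∀ c, Lext c u = 0 :=
    fun c => sum_eq_zero fun x _ => if_neg (hne c x)
  have hLu : L u = 1 := by
    show (if u = u then 1 else 0) + ∑ c, Lext c u = 1
    simp [hLextu]
  have hLval : ∀ (c : H.ConnectedComponent) (x : ↥c.supp), L (ι c x) = Lc c x := by
    intro c x
    show (if ι c x = u then 1 else 0) + ∑ c', Lext c' (ι c x) = Lc c x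
    rw [if_neg (hne c x), zero_add, Finset.sum_eq_single c]
    · show (∑ x' : ↥c.supp, if ι c x' = ι c x then Lc c x' else 0) = Lc c x
      rw [Finset.sum_eq_single x]
      · exact if_pos rfl
      · exact fun x' _ hx' => if_neg (fun h => hx' (hinj c h))
      · exact fun h => absurd (mem_univ x) h
    · intro c' _ hc'
      exact sum_eq_zero fun x' _ => if_neg (fun h => hc' (hcompeq c' c x' x h))
    · exact fun h => absurd (mem_univ c) h
  have hsumL : (∑ v, L v) = 1 + ∑ c : H.ConnectedComponent, deductionNumber (H.induce c.supp) := by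
    show (∑ v, ((if v = u then 1 else 0) + ∑ c, Lext c v)) = _
    rw [Finset.sum_add_distrib]
    congr 1
    · simp
    · rw [Finset.sum_comm]
      refine Finset.sum_congr rfl fun c _ => ?_
      rw [← hsumc c]
      show (∑ v, ∑ x : ↥c.supp, if ι c x = v then Lc c x else 0) = _
      rw [Finset.sum_comm]
      refine Finset.sum_congr rfl fun x _ => ?_
      simp
  have hout : ∀ (c : H.ConnectedComponent) (x : ↥c.supp) (w : V), G.Adj (ι c x) w → w ∉ Set.range (ι c) → 0 < L w := by
    intro c x w hadjw hwr
    by_cases hw : w = u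
    · subst hw; rw [hLu]; exact one_pos
    · exfalso
      have hwW : w ∈ ({u}ᶜ : Set V) := Set.mem_compl_singleton_iff.mpr hw
      have hadjH : H.Adj (x : ↥({u}ᶜ : Set V)) ⟨w, hwW⟩ := hadjw
      have hcc : H.connectedComponentMk ⟨w, hwW⟩ = c := by
        rw [← hccm c x]
        exact SimpleGraph.ConnectedComponent.sound hadjH.symm.reachable
      exact hwr ⟨⟨⟨w, hwW⟩, (SimpleGraph.ConnectedComponent.mem_supp_iff _ _).2 hcc⟩, rfl⟩
  have hadjc : ∀ (c : H.ConnectedComponent) (x y : ↥c.supp), (H.induce c.supp).Adj x y ↔ G.Adj (ι c x) (ι c y) :=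
    fun c x y => Iff.rfl
  have hssucc : ∀ c : H.ConnectedComponent, ∃ k,
      ((dedStep (H.induce c.supp) (Lc c))^[k] (univ.filter fun v => 0 < Lc c v, ∅)).1 = univ :=
    hsuccc
  choose kc hkc using hssucc
  have hLsucc : DedSuccessful G L := by
    refine ⟨univ.sup kc, ?_⟩
    apply Finset.eq_univ_iff_forall.2
    intro v
    by_cases hv : v = u
    · subst hv
      have h0 : v ∈ (univ.filter fun w => 0 < L w) :=
        mem_filter.2 ⟨mem_univ _, by rw [hLu]; exact one_pos⟩
      exact iter_fst_mono G L _ (Nat.zero_le _) (by simpa using h0)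
    · have hvW : v ∈ ({u}ᶜ : Set V) := Set.mem_compl_singleton_iff.mpr hv
      set c := H.connectedComponentMk ⟨v, hvW⟩ with hc
      let x : ↥c.supp := ⟨⟨v, hvW⟩, (SimpleGraph.ConnectedComponent.mem_supp_iff _ _).2 rfl⟩
      have hxP : x ∈ ((dedStep (H.induce c.supp) (Lc c))^[univ.sup kc]
          (univ.filter fun w => 0 < Lc c w, ∅)).1 :=
        iter_fst_mono _ _ _ (Finset.le_sup (mem_univ c)) (by rw [hkc c]; exact mem_univ x)
      exact (sim G (H.induce c.supp) (ι c) (hadjc c) L (Lc c) (hLval c) (hout c)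
        (univ.sup kc)).1 x hxP
  have key : deductionNumber G ≤ 1 + ∑ c : H.ConnectedComponent, deductionNumber (H.induce c.supp) := by
    rw [deductionNumber_eq]
    have hmem : (∑ v, L v) ∈ {n | ∃ L' : V → ℕ, (∑ v, L' v) = n ∧ DedSuccessful G L'} :=
      ⟨L, rfl, hLsucc⟩
    exact (Nat.sInf_le hmem).trans (le_of_eq hsumL)
  exact key
end

section
/- If C_n is the cycle on n ≥ 3 vertices, then d(C_n) = ⌈n/2⌉. -/
open Finset

namespace DedAux

variable {V : Type*} [Fintype V] [DecidableEq V] (G : SimpleGraph V) [DecidableRel G.Adj]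
  (L : V → ℕ)

lemma fst_subset (s : Finset V × Finset V) : s.1 ⊆ (dedStep G L s).1 := subset_union_left

lemma iterate_fst_subset (s : Finset V × Finset V) {k m : ℕ} (h : k ≤ m) :
    ((dedStep G L)^[k] s).1 ⊆ ((dedStep G L)^[m] s).1 := by
  induction m with
  | zero => simp_all
  | succ m ih =>
    rcases Nat.lt_or_ge k (m+1) with h' | h'
    · rw [Function.iterate_succ_apply']
      exact (ih (by omega)).trans (fst_subset ..)
    · have : k = m + 1 := by omega
      subst this; exact subset_rfl

lemma fired_protected (k : ℕ) :
    ∀ v ∈ ((dedStep G L)^[k] (univ.filter (fun v => 0 < L v), ∅)).2,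
      ∀ u, G.Adj v u → u ∈ ((dedStep G L)^[k] (univ.filter (fun v => 0 < L v), ∅)).1 := by
  induction k with
  | zero => simp
  | succ k ih =>
    rw [Function.iterate_succ_apply']
    set s := (dedStep G L)^[k] (univ.filter (fun v => 0 < L v), ∅) with hs
    intro v hv u hadj
    simp only [dedStep, mem_union, mem_filter, mem_univ, true_and] at hv ⊢
    rcases hv with hv | hv
    · exact Or.inl (ih v hv u hadj)
    · by_cases hu : u ∈ s.1
      · exact Or.inl hu
      · refine Or.inr (mem_biUnion.2 ⟨v, ?_, ?_⟩)
        · simp only [mem_filter, mem_univ, true_and]; exact hv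
        · simp [hadj, hu]

lemma fire_effect (k : ℕ) (v : V) (hv : 0 < L v)
    (hcard : (univ.filter (fun u => G.Adj v u ∧
        u ∉ ((dedStep G L)^[k] (univ.filter (fun v => 0 < L v), ∅)).1)).card ≤ L v) :
    ∀ u, G.Adj v u → u ∈ ((dedStep G L)^[k+1] (univ.filter (fun v => 0 < L v), ∅)).1 := by
  intro u hadj
  rw [Function.iterate_succ_apply']
  set s := (dedStep G L)^[k] (univ.filter (fun v => 0 < L v), ∅) with hs
  by_cases hv2 : v ∈ s.2
  · exact fst_subset G L s (fired_protected G L k v hv2 u hadj)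
  · simp only [dedStep, mem_union]
    by_cases hu : u ∈ s.1
    · exact Or.inl hu
    · refine Or.inr (mem_biUnion.2 ⟨v, ?_, by simp [hadj, hu]⟩)
      simp only [mem_filter, mem_univ, true_and]
      exact ⟨hv, hv2, hcard⟩

lemma card_bound (k : ℕ) :
    ((dedStep G L)^[k] (univ.filter (fun v => 0 < L v), ∅)).2
        ⊆ univ.filter (fun v => 0 < L v) ∧
    ((dedStep G L)^[k] (univ.filter (fun v => 0 < L v), ∅)).1.card ≤
      (univ.filter (fun v => 0 < L v)).card +
        ∑ v ∈ ((dedStep G L)^[k] (univ.filter (fun v => 0 < L v), ∅)).2, L v := by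
  induction k with
  | zero => simp
  | succ k ih =>
    rw [Function.iterate_succ_apply']
    set s := (dedStep G L)^[k] (univ.filter (fun v => 0 < L v), ∅) with hs
    obtain ⟨ih1, ih2⟩ := ih
    set fire : Finset V := univ.filter (fun v =>
      0 < L v ∧ v ∉ s.2 ∧ (univ.filter (fun u => G.Adj v u ∧ u ∉ s.1)).card ≤ L v) with hf
    have hstep : dedStep G L s =
        (s.1 ∪ fire.biUnion (fun v => univ.filter (fun u => G.Adj v u ∧ u ∉ s.1)),
          s.2 ∪ fire) := rfl
    rw [hstep]
    have hdisj : Disjoint s.2 fire := by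
      rw [disjoint_right]
      intro a ha
      simp only [hf, mem_filter] at ha
      exact ha.2.2.1
    constructor
    · intro a ha
      rcases mem_union.1 ha with h | h
      · exact ih1 h
      · simp only [hf, mem_filter] at h
        simp only [mem_filter, mem_univ, true_and]
        exact h.2.1
    · calc (s.1 ∪ fire.biUnion (fun v => univ.filter (fun u => G.Adj v u ∧ u ∉ s.1))).card
          ≤ s.1.card + (fire.biUnion (fun v => univ.filter (fun u => G.Adj v u ∧ u ∉ s.1))).card :=
            card_union_le _ _
        _ ≤ s.1.card + ∑ v ∈ fire, (univ.filter (fun u => G.Adj v u ∧ u ∉ s.1)).card :=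
            Nat.add_le_add_left (card_biUnion_le) _
        _ ≤ s.1.card + ∑ v ∈ fire, L v := by
            refine Nat.add_le_add_left (Finset.sum_le_sum ?_) _
            intro i hi
            simp only [hf, mem_filter] at hi
            exact hi.2.2.2
        _ ≤ (univ.filter (fun v => 0 < L v)).card + ∑ v ∈ s.2, L v + ∑ v ∈ fire, L v :=
            Nat.add_le_add_right ih2 _
        _ = (univ.filter (fun v => 0 < L v)).card + ∑ v ∈ s.2 ∪ fire, L v := by
            rw [Finset.sum_union hdisj]; ring

lemma lower_bound (h : DedSuccessful G L) : Fintype.card V ≤ 2 * ∑ v, L v := by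
  obtain ⟨k, hk⟩ := h
  obtain ⟨h1, h2⟩ := card_bound G L k
  rw [hk] at h2
  have hocc : (univ.filter (fun v => 0 < L v)).card
      ≤ ∑ v ∈ univ.filter (fun v => 0 < L v), L v := by
    calc (univ.filter (fun v => 0 < L v)).card
        = ∑ _v ∈ univ.filter (fun v => 0 < L v), 1 := by simp
      _ ≤ ∑ v ∈ univ.filter (fun v => 0 < L v), L v :=
          Finset.sum_le_sum (fun i hi => (mem_filter.1 hi).2)
  have h3 : ∑ v ∈ univ.filter (fun v => 0 < L v), L v ≤ ∑ v, L v :=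
    Finset.sum_le_sum_of_subset (subset_univ _)
  have h4 : ∑ v ∈ ((dedStep G L)^[k] (univ.filter (fun v => 0 < L v), ∅)).2, L v ≤ ∑ v, L v :=
    Finset.sum_le_sum_of_subset (subset_univ _)
  have := Finset.card_univ (α := V)
  omega

lemma mod_two_n (n x : ℕ) (hx : x < 2 * n) : x % n = if x < n then x else x - n := by
  split_ifs with h
  · exact Nat.mod_eq_of_lt h
  · rw [Nat.mod_eq_sub_mod (by omega), Nat.mod_eq_of_lt (by omega)]

lemma cycle_adj_iff {n : ℕ} (hn : 3 ≤ n) (u v : Fin n) :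
    (SimpleGraph.cycleGraph n).Adj u v ↔
      ((u.val + 1) % n = v.val ∨ (v.val + 1) % n = u.val) := by
  rw [SimpleGraph.cycleGraph_adj']
  have hu := u.isLt; have hv := v.isLt
  rw [Fin.sub_def, Fin.sub_def]
  simp only
  rw [mod_two_n n _ (by omega), mod_two_n n _ (by omega),
      mod_two_n n (u.val + 1) (by omega), mod_two_n n (v.val + 1) (by omega)]
  constructor
  · rintro (h | h) <;> [right; left] <;> split_ifs at h ⊢ <;> omega
  · rintro (h | h) <;> [right; left] <;> split_ifs at h ⊢ <;> omega

/-- The layout on the cycle: one searcher at `0` and one at every odd vertex below `n-1`. -/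
def cycL (n : ℕ) : Fin n → ℕ :=
  fun v => if v.val = 0 ∨ (v.val % 2 = 1 ∧ v.val < n - 1) then 1 else 0

lemma cycL_sum {n : ℕ} (hn : 3 ≤ n) : ∑ v, cycL n v = (n + 1) / 2 := by
  have h := Fin.sum_univ_eq_sum_range
    (fun i => if i = 0 ∨ (i % 2 = 1 ∧ i < n - 1) then 1 else 0) n
  have haux : ∀ k, 1 ≤ k → k ≤ n - 1 →
      ∑ i ∈ range k, (if i = 0 ∨ (i % 2 = 1 ∧ i < n - 1) then (1:ℕ) else 0) = k / 2 + 1 := by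
    intro k
    induction k with
    | zero => omega
    | succ k ih =>
      intro _ hk
      rcases Nat.eq_zero_or_pos k with rfl | hkpos
      · rw [Finset.sum_range_one, if_pos (Or.inl rfl)]
      · rw [Finset.sum_range_succ, ih hkpos (by omega)]
        by_cases h2 : k % 2 = 1
        · rw [if_pos (Or.inr ⟨h2, by omega⟩)]; omega
        · rw [if_neg (by omega)]; omega
  calc ∑ v, cycL n v
      = ∑ i ∈ range n, (if i = 0 ∨ (i % 2 = 1 ∧ i < n - 1) then (1:ℕ) else 0) := h
    _ = ∑ i ∈ range (n-1), (if i = 0 ∨ (i % 2 = 1 ∧ i < n - 1) then (1:ℕ) else 0)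
          + (if n-1 = 0 ∨ ((n-1) % 2 = 1 ∧ n-1 < n - 1) then (1:ℕ) else 0) := by
        have hn1 : n - 1 + 1 = n := by omega
        conv_lhs => rw [← hn1]
        rw [Finset.sum_range_succ]; simp only [hn1]
    _ = (n-1)/2 + 1 + 0 := by rw [haux (n-1) (by omega) le_rfl, if_neg (by omega)]
    _ = (n+1)/2 := by omega

lemma cycle_success (n : ℕ) (hn : 3 ≤ n) (d1 : DecidableEq (Fin n))
    (d2 : DecidableRel (SimpleGraph.cycleGraph n).Adj) :
    @DedSuccessful (Fin n) _ d1 (SimpleGraph.cycleGraph n) d2 (cycL n) := by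
  show ∃ k : ℕ,
    ((@dedStep (Fin n) _ d1 (SimpleGraph.cycleGraph n) d2 (cycL n))^[k]
      (univ.filter (fun v => 0 < cycL n v), ∅)).1 = univ
  set S := @dedStep (Fin n) _ d1 (SimpleGraph.cycleGraph n) d2 (cycL n) with hS
  set I : Finset (Fin n) × Finset (Fin n) :=
    (univ.filter (fun v => 0 < cycL n v), ∅) with hI
  have hmem0 : ∀ v : Fin n, (v.val = 0 ∨ (v.val % 2 = 1 ∧ v.val < n - 1)) → v ∈ I.1 := by
    intro v hv
    refine mem_filter.2 ⟨mem_univ v, ?_⟩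
    rw [cycL, if_pos hv]; exact Nat.one_pos
  have fireSub : ∀ (k : ℕ) (w v : Fin n), 0 < cycL n w →
      (∀ u : Fin n, (SimpleGraph.cycleGraph n).Adj w u → u ∉ (S^[k] I).1 → u = v) →
      (SimpleGraph.cycleGraph n).Adj w v → v ∈ (S^[k+1] I).1 := by
    intro k w v hw hunique hadj'
    refine @fire_effect (Fin n) _ d1 (SimpleGraph.cycleGraph n) d2 (cycL n) k w hw ?_ v hadj'
    refine le_trans (le_trans (card_le_card ?_) (card_singleton v).le) hw
    intro u hu
    simp only [mem_filter, mem_univ, true_and] at hu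
    simp only [mem_singleton]
    exact hunique u hu.1 hu.2
  have claimEven : ∀ j : ℕ, 2*j+2 ≤ n - 1 → ∀ v : Fin n, v.val = 2*j+2 →
      v ∈ (S^[j+1] I).1 := by
    intro j
    induction j using Nat.strong_induction_on with
    | _ j ih =>
      intro hle v hv
      have hwlt : 2*j+1 < n := by omega
      have hprev : (⟨2*j, by omega⟩ : Fin n) ∈ (S^[j] I).1 := by
        rcases Nat.eq_zero_or_pos j with rfl | hj
        · exact hmem0 _ (Or.inl rfl)
        · have h1 : j - 1 + 1 = j := by omega
          have := ih (j-1) (by omega) (by omega) ⟨2*j, by omega⟩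
            (by show 2*j = 2*(j-1)+2; omega)
          simpa only [h1] using this
      refine fireSub j ⟨2*j+1, hwlt⟩ v ?_ ?_ ?_
      · rw [cycL, if_pos (Or.inr ⟨by show (2*j+1) % 2 = 1; omega, by show 2*j+1 < n-1; omega⟩)]
        exact Nat.one_pos
      · intro u hadju hunp
        rw [cycle_adj_iff hn] at hadju
        have hadju' : (2*j+1+1) % n = u.val ∨ (u.val + 1) % n = 2*j+1 := hadju
        have hult := u.isLt
        rcases hadju' with h | h
        · rw [Nat.mod_eq_of_lt (by omega)] at h
          exact Fin.ext (show u.val = v.val by omega)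
        · exfalso
          rw [mod_two_n n _ (by omega)] at h
          have huv : u.val = 2*j := by split_ifs at h <;> omega
          have hueq : u = (⟨2*j, by omega⟩ : Fin n) := Fin.ext huv
          exact hunp (by rw [hueq]; exact hprev)
      · rw [cycle_adj_iff hn]
        left
        show (2*j+1+1) % n = v.val
        rw [Nat.mod_eq_of_lt (by omega)]
        omega
  have claimLast : (⟨n-1, by omega⟩ : Fin n) ∈ (S^[1] I).1 := by
    refine fireSub 0 ⟨0, by omega⟩ _ ?_ ?_ ?_
    · rw [cycL, if_pos (Or.inl rfl)]; exact Nat.one_pos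
    · intro u hadju hunp
      rw [cycle_adj_iff hn] at hadju
      have hadju' : (0+1) % n = u.val ∨ (u.val + 1) % n = 0 := hadju
      have hult := u.isLt
      rcases hadju' with h | h
      · exfalso
        rw [Nat.mod_eq_of_lt (by omega)] at h
        exact hunp (hmem0 u (Or.inr ⟨by omega, by omega⟩))
      · rw [mod_two_n n _ (by omega)] at h
        refine Fin.ext (show u.val = n - 1 from ?_)
        split_ifs at h <;> omega
    · rw [cycle_adj_iff hn]
      right
      show ((n-1) + 1) % n = 0
      rw [mod_two_n n _ (by omega), if_neg (by omega)]
      omega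
  refine ⟨n, Finset.eq_univ_iff_forall.2 ?_⟩
  intro v
  have hvlt := v.isLt
  by_cases h0 : v.val = 0 ∨ (v.val % 2 = 1 ∧ v.val < n - 1)
  · exact iterate_fst_subset _ _ I (Nat.zero_le n) (hmem0 v h0)
  · push_neg at h0
    by_cases hodd : v.val % 2 = 1
    · have hveq : v = (⟨n-1, by omega⟩ : Fin n) :=
        Fin.ext (show v.val = n - 1 by omega)
      rw [hveq]
      exact iterate_fst_subset _ _ I (by omega) claimLast
    · obtain ⟨j, hj⟩ : ∃ j, v.val = 2*j+2 := ⟨(v.val - 2)/2, by omega⟩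
      exact iterate_fst_subset _ _ I (by omega) (claimEven j (by omega) v hj)

end DedAux

theorem deduction_cycleGraph (n : ℕ) (hn : 3 ≤ n) :
    deductionNumber (SimpleGraph.cycleGraph n) = (n + 1) / 2 := by
  rw [deductionNumber]
  letI d1 := Classical.decEq (Fin n)
  letI d2 := Classical.decRel (SimpleGraph.cycleGraph n).Adj
  have hmem : ((n + 1) / 2) ∈
      {m | ∃ L : Fin n → ℕ, (∑ v, L v) = m ∧
        @DedSuccessful (Fin n) _ d1 (SimpleGraph.cycleGraph n) d2 L} :=
    ⟨DedAux.cycL n, DedAux.cycL_sum hn, DedAux.cycle_success n hn d1 d2⟩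
  apply le_antisymm
  · exact Nat.sInf_le hmem
  · refine le_csInf ⟨_, hmem⟩ ?_
    rintro b ⟨L, hsum, hsucc⟩
    have := DedAux.lower_bound (SimpleGraph.cycleGraph n) L hsucc
    simp only [Fintype.card_fin] at this
    omega
end

section
/- If G is a graph of order n and G contains a clique of order m < n, then d(K_m) ≤ d(G); equivalently, m − 1 ≤ d(G). -/
/-!
Fix a clique `s` of size `m` and a successful layout `L`. Throughout the game, the protected
vertices of `s` plus the fired vertices of `s` number at most the searchers fired so far plus the
occupied vertices of `s`, plus one once a vertex of `s` has fired. A firing vertex protects at most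
as many vertices as it has searchers; when a vertex `w` of `s` fires, every unprotected vertex of
`s` is a neighbour of `w`, so `L w` searchers protect all of `s` at once and the extra one pays
for `w` joining the fired vertices. At the end all of
`s` is protected, whence `m ≤ ∑ L + 1`. Conversely `max (m - 1) 1` searchers on one vertex clear
`K_m` in a single stage, and a graph with a vertex needs at least one searcher.
-/

open Finset

lemma Finset.card_le_sum_of_pos {ι : Type*} {t : Finset ι} {f : ι → ℕ}
    (hf : ∀ i ∈ t, 0 < f i) : #t ≤ ∑ i ∈ t, f i := by
  simpa using card_nsmul_le_sum t f 1 hf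

namespace DeductionGame

variable {V : Type*} [Fintype V] [DecidableEq V]

section Stage

variable (G : SimpleGraph V) [DecidableRel G.Adj] (L : V → ℕ)

def occupied : Finset V := univ.filter (fun v => 0 < L v)

def unprotectedNbrs (P : Finset V) (v : V) : Finset V :=
  univ.filter (fun u => G.Adj v u ∧ u ∉ P)

def fireSet (P F : Finset V) : Finset V :=
  univ.filter (fun v => 0 < L v ∧ v ∉ F ∧ #(unprotectedNbrs G P v) ≤ L v)

lemma dedStep_eq_s10 (P F : Finset V) :
    dedStep G L (P, F) =
      (P ∪ (fireSet G L P F).biUnion (unprotectedNbrs G P), F ∪ fireSet G L P F) := rfl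

lemma dedSuccessful_iff :
    DedSuccessful G L ↔ ∃ k, ((dedStep G L)^[k] (occupied L, ∅)).1 = univ := Iff.rfl

variable {G L}

lemma mem_fireSet {P F : Finset V} {v : V} :
    v ∈ fireSet G L P F ↔ 0 < L v ∧ v ∉ F ∧ #(unprotectedNbrs G P v) ≤ L v := by
  simp [fireSet]

lemma sdiff_subset_unprotectedNbrs {s P : Finset V} {w : V} (hs : G.IsClique s) (hws : w ∈ s)
    (hwP : w ∈ P) : s \ P ⊆ unprotectedNbrs G P w := by
  intro u hu
  obtain ⟨hus, huP⟩ := mem_sdiff.1 hu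
  have hwu : w ≠ u := by rintro rfl; exact huP hwP
  simpa [unprotectedNbrs] using ⟨hs hws hus hwu, huP⟩

lemma card_protected_clique_le {s P F X : Finset V} (hs : G.IsClique s)
    (hsP : (F ∩ s).Nonempty → s ⊆ P) (hXP : X ⊆ P)
    (hXL : ∀ v ∈ X, 0 < L v ∧ #(unprotectedNbrs G P v) ≤ L v) :
    #((X.biUnion (unprotectedNbrs G P) ∩ s) \ P) + #(X ∩ s) +
        (if (F ∩ s).Nonempty then 1 else 0)
      ≤ ∑ v ∈ X, L v + if ((F ∪ X) ∩ s).Nonempty then 1 else 0 := by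
  have hX : #X ≤ ∑ v ∈ X, L v := card_le_sum_of_pos fun v hv => (hXL v hv).1
  by_cases hF : (F ∩ s).Nonempty
  · have hFX : ((F ∪ X) ∩ s).Nonempty := hF.mono (inter_subset_inter_right subset_union_left)
    have hnew : (X.biUnion (unprotectedNbrs G P) ∩ s) \ P = ∅ :=
      sdiff_eq_empty_iff_subset.2 (inter_subset_right.trans (hsP hF))
    rw [if_pos hF, if_pos hFX, hnew, card_empty]
    have := card_le_card (inter_subset_left (s₁ := X) (s₂ := s))
    omega
  rw [if_neg hF]
  obtain ⟨w, hw⟩ | hXs := (X ∩ s).eq_empty_or_nonempty.symm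
  · obtain ⟨hwX, hws⟩ := mem_inter.1 hw
    have hFX : ((F ∪ X) ∩ s).Nonempty := ⟨w, by simp [hwX, hws]⟩
    have hnew : #((X.biUnion (unprotectedNbrs G P) ∩ s) \ P) ≤ L w :=
      (card_le_card (sdiff_subset_sdiff inter_subset_right subset_rfl)).trans <|
        (card_le_card (sdiff_subset_unprotectedNbrs hs hws (hXP hwX))).trans (hXL w hwX).2
    have hrest : #(X.erase w) ≤ ∑ v ∈ X.erase w, L v :=
      card_le_sum_of_pos fun v hv => (hXL v (mem_of_mem_erase hv)).1
    have := card_le_card (inter_subset_left (s₁ := X) (s₂ := s))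
    rw [if_pos hFX, ← add_sum_erase X L hwX]
    rw [← card_erase_add_one hwX] at this
    omega
  · have hnew : #((X.biUnion (unprotectedNbrs G P) ∩ s) \ P) ≤ ∑ v ∈ X, L v :=
      calc #((X.biUnion (unprotectedNbrs G P) ∩ s) \ P)
          _ ≤ #(X.biUnion (unprotectedNbrs G P)) :=
            card_le_card (sdiff_subset.trans inter_subset_left)
          _ ≤ ∑ v ∈ X, #(unprotectedNbrs G P v) := card_biUnion_le
          _ ≤ ∑ v ∈ X, L v := sum_le_sum fun v hv => (hXL v hv).2
    rw [hXs, card_empty]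
    omega

end Stage

section Invariant

variable {G : SimpleGraph V} [DecidableRel G.Adj] {L : V → ℕ} {s : Finset V}

structure CliqueBound (L : V → ℕ) (s P F : Finset V) : Prop where
  occupied_subset : occupied L ⊆ P
  subset_of_fired : (F ∩ s).Nonempty → s ⊆ P
  card_le : #(P ∩ s) + #(F ∩ s) ≤ ∑ v ∈ F, L v + #(occupied L ∩ s) +
    if (F ∩ s).Nonempty then 1 else 0

lemma cliqueBound_occupied : CliqueBound L s (occupied L) ∅ where
  occupied_subset := subset_rfl
  subset_of_fired h := by simp at h
  card_le := by simp

lemma CliqueBound.dedStep {P F : Finset V} (h : CliqueBound L s P F) (hs : G.IsClique s) :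
    CliqueBound L s (dedStep G L (P, F)).1 (dedStep G L (P, F)).2 := by
  rw [dedStep_eq_s10]
  set X := fireSet G L P F
  have hXL : ∀ v ∈ X, 0 < L v ∧ #(unprotectedNbrs G P v) ≤ L v := fun v hv =>
    ⟨(mem_fireSet.1 hv).1, (mem_fireSet.1 hv).2.2⟩
  have hXP : X ⊆ P := fun v hv => h.occupied_subset (by simp [occupied, (hXL v hv).1])
  have hFX : Disjoint F X := disjoint_right.2 fun v hv => (mem_fireSet.1 hv).2.1
  refine ⟨h.occupied_subset.trans subset_union_left, ?_, ?_⟩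
  · rintro ⟨w, hw⟩
    obtain ⟨hwF | hwX, hws⟩ : (w ∈ F ∨ w ∈ X) ∧ w ∈ s := by simpa using hw
    · exact (h.subset_of_fired ⟨w, mem_inter.2 ⟨hwF, hws⟩⟩).trans subset_union_left
    · intro u hus
      by_cases huP : u ∈ P
      · exact mem_union_left _ huP
      · exact mem_union_right _ <| mem_biUnion.2 ⟨w, hwX,
          sdiff_subset_unprotectedNbrs hs hws (hXP hwX) (mem_sdiff.2 ⟨hus, huP⟩)⟩
  · have hprot : #((P ∪ X.biUnion (unprotectedNbrs G P)) ∩ s)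
        ≤ #(P ∩ s) + #((X.biUnion (unprotectedNbrs G P) ∩ s) \ P) := by
      refine (card_le_card fun u hu => ?_).trans (card_union_le _ _)
      simp only [mem_union, mem_inter, mem_sdiff] at hu ⊢
      tauto
    have hfired : #((F ∪ X) ∩ s) = #(F ∩ s) + #(X ∩ s) := by
      rw [union_inter_distrib_right,
        card_union_of_disjoint (hFX.mono inter_subset_left inter_subset_left)]
    have := card_protected_clique_le hs h.subset_of_fired hXP hXL
    have := h.card_le
    dsimp only
    rw [sum_union hFX]
    omega

lemma cliqueBound_iterate (hs : G.IsClique s) (k : ℕ) :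
    CliqueBound L s ((dedStep G L)^[k] (occupied L, ∅)).1
      ((dedStep G L)^[k] (occupied L, ∅)).2 := by
  induction k with
  | zero => exact cliqueBound_occupied
  | succ k ih => rw [Function.iterate_succ_apply']; exact ih.dedStep hs

lemma card_le_sum_add_one {m : ℕ} (hs : G.IsNClique m s) (hL : DedSuccessful G L) :
    m ≤ ∑ v, L v + 1 := by
  obtain ⟨k, hk⟩ := (dedSuccessful_iff G L).1 hL
  obtain ⟨-, -, hcard⟩ := cliqueBound_iterate (L := L) hs.isClique k
  set F := ((dedStep G L)^[k] (occupied L, ∅)).2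
  rw [hk, univ_inter, hs.card_eq] at hcard
  have hunfired : #((occupied L ∩ s) \ F) ≤ ∑ v ∈ Fᶜ, L v :=
    calc #((occupied L ∩ s) \ F)
      _ ≤ ∑ v ∈ (occupied L ∩ s) \ F, L v := card_le_sum_of_pos fun v hv => by
          simpa [occupied] using (mem_inter.1 (mem_sdiff.1 hv).1).1
      _ ≤ ∑ v ∈ Fᶜ, L v := sum_le_sum_of_subset fun v hv => by
          simpa using (mem_sdiff.1 hv).2
  have hfired : #(occupied L ∩ s ∩ F) ≤ #(F ∩ s) :=
    card_le_card fun v hv => by simp only [mem_inter] at hv ⊢; tauto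
  have := card_inter_add_card_sdiff (occupied L ∩ s) F
  have := sum_add_sum_compl F L
  split_ifs at hcard <;> omega

end Invariant

section Bounds

variable {G : SimpleGraph V} [DecidableRel G.Adj]

lemma dedSuccessful_one : DedSuccessful G (fun _ => 1) := ⟨0, by simp⟩

lemma sum_pos_of_dedSuccessful [Nonempty V] {L : V → ℕ} (hL : DedSuccessful G L) :
    0 < ∑ v, L v := by
  by_contra! h0
  have hL0 : ∀ v, L v = 0 := by simpa using h0
  have hfix : dedStep G L (occupied L, ∅) = (occupied L, ∅) := by simp [dedStep, hL0]
  obtain ⟨k, hk⟩ := (dedSuccessful_iff G L).1 hL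
  rw [Function.iterate_fixed hfix] at hk
  have hempty : (∅ : Finset V) = univ := by simpa [occupied, hL0] using hk
  exact univ_nonempty.ne_empty hempty.symm

lemma deductionNumber_le_sum {L : V → ℕ} (hL : DedSuccessful G L) :
    deductionNumber G ≤ ∑ v, L v :=
  Nat.sInf_le ⟨L, rfl, by convert hL⟩

lemma le_deductionNumber {n : ℕ} (h : ∀ L : V → ℕ, DedSuccessful G L → n ≤ ∑ v, L v) :
    n ≤ deductionNumber G := by
  refine le_csInf ⟨_, _, rfl, by convert dedSuccessful_one (G := G)⟩ ?_
  rintro _ ⟨L, rfl, hL⟩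
  exact h L (by convert hL)

end Bounds

section Complete

variable {W : Type*} [Fintype W] [DecidableEq W]

lemma unprotectedNbrs_top {P : Finset W} {v : W} (hv : v ∈ P) :
    unprotectedNbrs (⊤ : SimpleGraph W) P v = Pᶜ := by
  ext u
  simp only [unprotectedNbrs, mem_filter, mem_univ, true_and, SimpleGraph.top_adj, mem_compl]
  exact ⟨And.right, fun hu => ⟨fun hvu => hu (hvu ▸ hv), hu⟩⟩

lemma dedSuccessful_top_single (x : W) {k : ℕ} (hk : 0 < k) (hcard : Fintype.card W - 1 ≤ k) :
    DedSuccessful (⊤ : SimpleGraph W) (Pi.single x k) := by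
  have hocc : occupied (Pi.single x k) = {x} := by
    ext v
    by_cases hv : v = x <;> simp [occupied, hv, hk]
  have hnbrs := unprotectedNbrs_top (P := {x}) (mem_singleton_self x)
  have hfire : x ∈ fireSet ⊤ (Pi.single x k) {x} ∅ := by
    rw [mem_fireSet, hnbrs, card_compl, card_singleton]
    exact ⟨by simpa using hk, notMem_empty x, by simpa using hcard⟩
  refine (dedSuccessful_iff _ _).2 ⟨1, ?_⟩
  rw [Function.iterate_one, hocc, dedStep_eq_s10, eq_univ_iff_forall]
  intro u
  by_cases hu : u = x
  · simp [hu]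
  · exact mem_union_right _ (mem_biUnion.2 ⟨x, hfire, by simpa [hnbrs] using hu⟩)

lemma deductionNumber_top_le [Nonempty W] :
    deductionNumber (⊤ : SimpleGraph W) ≤ max (Fintype.card W - 1) 1 := by
  obtain ⟨x⟩ := ‹Nonempty W›
  simpa using deductionNumber_le_sum
    (dedSuccessful_top_single x (lt_max_of_lt_right one_pos) (le_max_left _ 1))

end Complete

end DeductionGame

open DeductionGame

theorem deduction_clique_le_general {V : Type*} [Fintype V] (G : SimpleGraph V) (m : ℕ)
    (s : Finset V) (hs : G.IsNClique m s) :
    deductionNumber (⊤ : SimpleGraph (Fin m)) ≤ deductionNumber G ∧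
      m - 1 ≤ deductionNumber G := by
  classical
  have hclique : m - 1 ≤ deductionNumber G :=
    le_deductionNumber fun L hL => Nat.sub_le_of_le_add (card_le_sum_add_one hs hL)
  refine ⟨?_, hclique⟩
  obtain rfl | hm := Nat.eq_zero_or_pos m
  · exact (deductionNumber_le_sum dedSuccessful_one).trans (by simp)
  · obtain ⟨v, -⟩ := card_pos.1 (hs.card_eq.symm ▸ hm)
    have : Nonempty V := ⟨v⟩
    have : Nonempty (Fin m) := ⟨⟨0, hm⟩⟩
    have hpos : 1 ≤ deductionNumber G := le_deductionNumber fun _ => sum_pos_of_dedSuccessful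
    calc deductionNumber (⊤ : SimpleGraph (Fin m))
      _ ≤ max (m - 1) 1 := by simpa using deductionNumber_top_le (W := Fin m)
      _ ≤ deductionNumber G := max_le hclique hpos

theorem deduction_clique_le {V : Type*} [Fintype V] (G : SimpleGraph V) (m : ℕ)
    (s : Finset V) (hs : G.IsNClique m s) (hm : m < Fintype.card V) :
    deductionNumber (⊤ : SimpleGraph (Fin m)) ≤ deductionNumber G ∧
      m - 1 ≤ deductionNumber G :=
  deduction_clique_le_general G m s hs
end

section
/- Let G = K_{n_1, …, n_m} be a complete multipartite graph with m ≥ 2 parts and total order N = Σ n_i. Then d(G) = N − 1 if all parts have size 1, or if m = 2 and some part has size 1; otherwise d(G) = N − 2. -/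
/-!
If some part is a single vertex, that vertex is adjacent to all others, and N − 1 searchers on it
protect everything at once. Otherwise leave empty a vertex `a` of a part with at least two
vertices and a vertex `b` of another part, and put one searcher on every other vertex: the second
vertex of `a`'s part protects `b`, and then any occupied vertex outside `a`'s part protects `a`.

Conversely, two unoccupied vertices of the same part are protected at the same stage. A vertex `v`
firing at the first productive stage carries at least as many searchers as there are unoccupied
vertices outside its part; the unoccupied vertices of its own part are protected together by a
single vertex `w` of another part, which carries at least as many searchers as there are of them.
Counting one searcher on each other occupied vertex gives N − 2, and N − 1 when `w` is not needed.
In the exceptional cases `w` cannot exist: either `v`'s part is `{v}`, or there are two parts and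
`w` would be the single vertex of the other part, which is unoccupied.
-/

open Finset SimpleGraph

lemma Fintype.eq_of_ne_of_ne_of_card_le_two {α : Type*} [Fintype α] [DecidableEq α] {x y z : α}
    (h : Fintype.card α ≤ 2) (hx : x ≠ z) (hy : y ≠ z) : x = y := by
  by_contra hxy
  have := card_le_univ ({x, y, z} : Finset α)
  rw [card_eq_three.2 ⟨x, y, z, hxy, hx, hy, rfl⟩] at this
  omega

lemma Sigma.eq_of_fst_eq_of_subsingleton {ι : Type*} {V : ι → Type*} {x y : Σ i, V i}
    (h : x.1 = y.1) (hs : Subsingleton (V x.1)) : x = y :=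
  Sigma.ext h (Subsingleton.helim (congrArg V h) _ _)

lemma Fintype.card_le_sum_add_card {α : Type*} [Fintype α] (f : α → ℕ) (S : Finset α)
    (h : #{x | f x = 0} ≤ ∑ x ∈ S, f x) : Fintype.card α ≤ ∑ x, f x + #S := by
  classical
  have hsplit := card_filter_add_card_filter_not (s := univ) (fun x => f x = 0)
  rw [card_univ] at hsplit
  have : #{x | ¬f x = 0} + ∑ x ∈ S, f x ≤ ∑ x, f x + #S :=
    calc #{x | ¬f x = 0} + ∑ x ∈ S, f x
        = ∑ x, ((if f x = 0 then 0 else 1) + if x ∈ S then f x else 0) := by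
          rw [sum_add_distrib, ← sum_filter, filter_mem_eq_inter, univ_inter]; simp [card_filter]
      _ ≤ ∑ x, (f x + if x ∈ S then 1 else 0) := sum_le_sum fun x _ => by split_ifs <;> omega
      _ = ∑ x, f x + #S := by rw [sum_add_distrib, sum_boole]; simp
  omega

lemma Fintype.sum_ite_eq_card_sub_two {V : Type*} [Fintype V] [DecidableEq V] {a b : V}
    (hab : a ≠ b) :
    ∑ u, (if u = a ∨ u = b then 0 else 1) = Fintype.card V - 2 := by
  have hpair : ({u | u = a ∨ u = b} : Finset V) = {a, b} := by ext; simp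
  have := card_filter_add_card_filter_not (s := univ) (fun u => u = a ∨ u = b)
  rw [hpair, card_pair hab, card_univ] at this
  rw [Finset.sum_ite, sum_const_zero, zero_add, sum_const, smul_eq_mul, mul_one]
  omega

namespace Deduction

section Game

variable {V : Type*} [Fintype V] [DecidableEq V] (G : SimpleGraph V) [DecidableRel G.Adj]
  (L : V → ℕ)

def state (k : ℕ) : Finset V × Finset V :=
  (dedStep G L)^[k] (({v | 0 < L v} : Finset V), ∅)

def protectedAt (k : ℕ) : Finset V := (state G L k).1

def firedAt (k : ℕ) : Finset V := (state G L k).2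

def unprotectedNeighbors (P : Finset V) (v : V) : Finset V := {u | G.Adj v u ∧ u ∉ P}

def firingAt (k : ℕ) : Finset V :=
  {v | 0 < L v ∧ v ∉ firedAt G L k ∧ #(unprotectedNeighbors G (protectedAt G L k) v) ≤ L v}

variable {G L}

lemma dedSuccessful_iff : DedSuccessful G L ↔ ∃ k, protectedAt G L k = univ := Iff.rfl

lemma mem_protectedAt_zero {v : V} : v ∈ protectedAt G L 0 ↔ 0 < L v := by
  simp [protectedAt, state]

lemma protectedAt_succ (k : ℕ) :
    protectedAt G L (k + 1) = protectedAt G L k ∪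
      (firingAt G L k).biUnion (unprotectedNeighbors G (protectedAt G L k)) := by
  simp only [protectedAt, firedAt, firingAt, state, Function.iterate_succ_apply']
  rfl

lemma firedAt_succ (k : ℕ) : firedAt G L (k + 1) = firedAt G L k ∪ firingAt G L k := by
  simp only [protectedAt, firedAt, firingAt, state, Function.iterate_succ_apply']
  rfl

lemma monotone_protectedAt : Monotone (protectedAt G L) :=
  monotone_nat_of_le_succ fun k => by rw [protectedAt_succ]; exact subset_union_left

lemma mem_unprotectedNeighbors {P : Finset V} {v u : V} :
    u ∈ unprotectedNeighbors G P v ↔ G.Adj v u ∧ u ∉ P := by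
  simp [unprotectedNeighbors]

lemma mem_firingAt {k : ℕ} {v : V} :
    v ∈ firingAt G L k ↔ 0 < L v ∧ v ∉ firedAt G L k ∧
      #(unprotectedNeighbors G (protectedAt G L k) v) ≤ L v := by
  simp [firingAt]

lemma mem_protectedAt_succ_of_mem_firingAt {k : ℕ} {w u : V} (hw : w ∈ firingAt G L k)
    (hwu : G.Adj w u) : u ∈ protectedAt G L (k + 1) := by
  by_cases hu : u ∈ protectedAt G L k
  · exact monotone_protectedAt k.le_succ hu
  · rw [protectedAt_succ]
    exact mem_union_right _ (mem_biUnion.2 ⟨w, hw, mem_unprotectedNeighbors.2 ⟨hwu, hu⟩⟩)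

lemma exists_mem_firingAt_adj {k : ℕ} {u : V} (h : u ∈ protectedAt G L (k + 1))
    (hu : u ∉ protectedAt G L k) : ∃ w ∈ firingAt G L k, G.Adj w u := by
  rw [protectedAt_succ, mem_union] at h
  obtain ⟨w, hw, hwu⟩ := mem_biUnion.1 (h.resolve_left hu)
  exact ⟨w, hw, (mem_unprotectedNeighbors.1 hwu).1⟩

lemma mem_protectedAt_of_mem_firedAt {k : ℕ} {w u : V} (hw : w ∈ firedAt G L k)
    (hwu : G.Adj w u) : u ∈ protectedAt G L k := by
  induction k with
  | zero => simp [firedAt, state] at hw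
  | succ k ih =>
    rw [firedAt_succ, mem_union] at hw
    exact hw.elim (fun hw => monotone_protectedAt k.le_succ (ih hw))
      (fun hw => mem_protectedAt_succ_of_mem_firingAt hw hwu)

/-- If `v` does not fire at stage `k`, it fired earlier and protected its neighbours then. -/
lemma mem_protectedAt_succ_of_card_le {k : ℕ} {v u : V} (hv : 0 < L v)
    (hcard : #(unprotectedNeighbors G (protectedAt G L k) v) ≤ L v) (hvu : G.Adj v u) :
    u ∈ protectedAt G L (k + 1) := by
  by_cases hfired : v ∈ firedAt G L k
  · exact monotone_protectedAt k.le_succ (mem_protectedAt_of_mem_firedAt hfired hvu)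
  · exact mem_protectedAt_succ_of_mem_firingAt (mem_firingAt.2 ⟨hv, hfired, hcard⟩) hvu

lemma unprotectedNeighbors_protectedAt_zero (v : V) :
    unprotectedNeighbors G (protectedAt G L 0) v = ({u | G.Adj v u ∧ L u = 0} : Finset V) := by
  ext u
  simp [mem_unprotectedNeighbors, mem_protectedAt_zero]

lemma exists_firingAt_adj_of_dedSuccessful (hL : DedSuccessful G L) {u : V} (hu : L u = 0) :
    ∃ k, u ∉ protectedAt G L k ∧ ∃ w ∈ firingAt G L k, G.Adj w u := by
  obtain ⟨K, hK⟩ := dedSuccessful_iff.1 hL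
  obtain ⟨k, hk, hk'⟩ := Nat.exists_not_and_succ_of_not_zero_of_exists
    (p := (u ∈ protectedAt G L ·)) (by simp [mem_protectedAt_zero, hu])
    ⟨K, hK ▸ mem_univ u⟩
  exact ⟨k, hk, exists_mem_firingAt_adj hk' hk⟩

/-- A vertex firing at the first stage at which the protected set grows sees the initial
configuration. -/
lemma exists_fireable_initially (hL : DedSuccessful G L) (hU : ∃ u, L u = 0) :
    ∃ v, 0 < L v ∧ ({u | G.Adj v u ∧ L u = 0} : Finset V).Nonempty ∧
      #{u | G.Adj v u ∧ L u = 0} ≤ L v := by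
  obtain ⟨K, hK⟩ := dedSuccessful_iff.1 hL
  obtain ⟨u, hu⟩ := hU
  obtain ⟨k, hk, hk'⟩ := Nat.exists_not_and_succ_of_not_zero_of_exists
    (p := (protectedAt G L · ≠ protectedAt G L 0)) (by simp)
    ⟨K, fun h => by
      have : u ∈ protectedAt G L 0 := h ▸ hK ▸ mem_univ u
      simp [mem_protectedAt_zero, hu] at this⟩
  rw [not_not] at hk
  obtain ⟨x, hx, hxk⟩ := exists_of_ssubset
    ((monotone_protectedAt k.le_succ).ssubset_of_ne (hk ▸ Ne.symm hk'))
  obtain ⟨v, hv, hvx⟩ := exists_mem_firingAt_adj hx hxk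
  obtain ⟨hLv, -, hcard⟩ := mem_firingAt.1 hv
  have hx : x ∈ unprotectedNeighbors G (protectedAt G L k) v :=
    mem_unprotectedNeighbors.2 ⟨hvx, hxk⟩
  rw [hk, unprotectedNeighbors_protectedAt_zero] at hcard hx
  exact ⟨v, hLv, ⟨x, hx⟩, hcard⟩

lemma dedSuccessful_pi_single (v₀ : V) (hadj : ∀ u, u ≠ v₀ → G.Adj v₀ u)
    (hcard : 1 < Fintype.card V) : DedSuccessful G (Pi.single v₀ (Fintype.card V - 1)) := by
  refine dedSuccessful_iff.2 ⟨1, eq_univ_of_forall fun u => ?_⟩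
  have hv₀ : 0 < Pi.single (M := fun _ => ℕ) v₀ (Fintype.card V - 1) v₀ := by simp; omega
  by_cases hu : u = v₀
  · subst hu
    exact monotone_protectedAt zero_le_one (mem_protectedAt_zero.2 hv₀)
  refine mem_protectedAt_succ_of_card_le hv₀ ?_ (hadj u hu)
  calc #(unprotectedNeighbors G _ v₀) ≤ #(univ.erase v₀) :=
        card_le_card fun w hw =>
          mem_erase.2 ⟨(G.ne_of_adj (mem_unprotectedNeighbors.1 hw).1).symm, mem_univ w⟩
    _ = _ := by simp

/-- `c` protects `b` at stage `0`; then `a` is the only unprotected vertex, and `d` protects it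
at stage `1`. -/
lemma dedSuccessful_of_two_unoccupied {a b c d : V} (hcb : G.Adj c b) (hca : ¬G.Adj c a)
    (hc : c ≠ a) (hda : G.Adj d a) (hdb : d ≠ b) :
    DedSuccessful G (fun u => if u = a ∨ u = b then 0 else 1) := by
  set L : V → ℕ := fun u => if u = a ∨ u = b then 0 else 1
  have hL : ∀ u, u ≠ a → u ≠ b → L u = 1 := fun u ha hb => by simp [L, ha, hb]
  have hunocc : ∀ k u, u ∉ protectedAt G L k → u = a ∨ u = b := fun k u hu => by
    by_contra h
    exact hu (monotone_protectedAt k.zero_le (mem_protectedAt_zero.2 (by simp [L, h])))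
  have hb : b ∈ protectedAt G L 1 := by
    refine mem_protectedAt_succ_of_card_le (by rw [hL c hc (G.ne_of_adj hcb)]; simp) ?_ hcb
    rw [hL c hc (G.ne_of_adj hcb)]
    refine card_le_one.2 fun x hx y hy => ?_
    rw [mem_unprotectedNeighbors] at hx hy
    have : ∀ z, G.Adj c z → z ∉ protectedAt G L 0 → z = b := fun z hz hz0 =>
      (hunocc 0 z hz0).resolve_left (by rintro rfl; exact hca hz)
    rw [this x hx.1 hx.2, this y hy.1 hy.2]
  have ha : a ∈ protectedAt G L 2 := by
    refine mem_protectedAt_succ_of_card_le (by rw [hL d (G.ne_of_adj hda) hdb]; simp) ?_ hda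
    rw [hL d (G.ne_of_adj hda) hdb]
    refine card_le_one.2 fun x hx y hy => ?_
    rw [mem_unprotectedNeighbors] at hx hy
    have : ∀ z, z ∉ protectedAt G L 1 → z = a := fun z hz1 =>
      (hunocc 1 z hz1).resolve_right (by rintro rfl; exact hz1 hb)
    rw [this x hx.2, this y hy.2]
  refine dedSuccessful_iff.2 ⟨2, eq_univ_of_forall fun u => ?_⟩
  by_contra hu
  obtain rfl | rfl := hunocc 2 u hu
  exacts [hu ha, hu (monotone_protectedAt one_le_two hb)]

end Game

lemma deductionNumber_eq {V : Type*} [Fintype V] [DecidableEq V] {G : SimpleGraph V}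
    [DecidableRel G.Adj] {k : ℕ} (hex : ∃ L : V → ℕ, ∑ v, L v = k ∧ DedSuccessful G L)
    (hle : ∀ L : V → ℕ, DedSuccessful G L → k ≤ ∑ v, L v) : deductionNumber G = k := by
  obtain rfl : ‹DecidableEq V› = Classical.decEq V := Subsingleton.elim _ _
  obtain rfl : ‹DecidableRel G.Adj› = Classical.decRel G.Adj := Subsingleton.elim _ _
  refine IsLeast.csInf_eq ⟨hex, ?_⟩
  rintro _ ⟨L, rfl, hL⟩
  exact hle L hL

section CompleteMultipartite

variable {ι : Type*} {V : ι → Type*} [Fintype ι] [∀ i, Fintype (V i)] [DecidableEq ι]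
  {L : (Σ i, V i) → ℕ}

lemma card_unoccupied_eq (i : ι) : #{u | L u = 0} =
    #{u | L u = 0 ∧ u.1 ≠ i} + #{u : Σ i, V i | L u = 0 ∧ u.1 = i} := by
  rw [← card_filter_add_card_filter_not (s := ({u | L u = 0} : Finset _)) (fun u => u.1 ≠ i),
    filter_filter, filter_filter]
  simp only [not_not]

lemma card_le_sum_add_one_of_fireable {v : Σ i, V i} (hA : #{u | L u = 0 ∧ u.1 ≠ v.1} ≤ L v)
    (hB : ∀ u, L u = 0 → u.1 ≠ v.1) : Fintype.card (Σ i, V i) ≤ ∑ u, L u + 1 := by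
  have hU : #{u | L u = 0} = #{u | L u = 0 ∧ u.1 ≠ v.1} := congrArg card <|
    filter_congr fun u _ => ⟨fun h => ⟨h, hB u h⟩, And.left⟩
  simpa using Fintype.card_le_sum_add_card L {v} (by rwa [hU, sum_singleton])

variable [∀ i, DecidableEq (V i)]

/-- A firing vertex adjacent to one of `x`, `y` is adjacent to the other. -/
lemma mem_protectedAt_of_fst_eq {k : ℕ} {x y : Σ i, V i} (hx : L x = 0) (hy : L y = 0)
    (hxy : x.1 = y.1) (h : x ∈ protectedAt (completeMultipartiteGraph V) L k) :
    y ∈ protectedAt (completeMultipartiteGraph V) L k := by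
  induction k generalizing x y with
  | zero => simp [mem_protectedAt_zero, hx] at h
  | succ k ih =>
    by_cases hyk : y ∈ protectedAt (completeMultipartiteGraph V) L k
    · exact monotone_protectedAt k.le_succ hyk
    obtain ⟨w, hw, hwx⟩ := exists_mem_firingAt_adj h fun hxk => hyk (ih hx hy hxy hxk)
    exact mem_protectedAt_succ_of_mem_firingAt hw (by simpa [hxy] using hwx)

lemma exists_fireable_of_dedSuccessful (hL : DedSuccessful (completeMultipartiteGraph V) L)
    (hU : ∃ u, L u = 0) :
    ∃ v, 0 < L v ∧ ({u | L u = 0 ∧ u.1 ≠ v.1} : Finset (Σ i, V i)).Nonempty ∧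
      #{u | L u = 0 ∧ u.1 ≠ v.1} ≤ L v := by
  simpa [and_comm, ne_comm] using exists_fireable_initially hL hU

lemma card_unoccupied_part_le (hL : DedSuccessful (completeMultipartiteGraph V) L)
    {b : Σ i, V i} (hb : L b = 0) :
    ∃ w, 0 < L w ∧ w.1 ≠ b.1 ∧ #{u | L u = 0 ∧ u.1 = b.1} ≤ L w := by
  obtain ⟨k, hbk, w, hw, hwb⟩ := exists_firingAt_adj_of_dedSuccessful hL hb
  obtain ⟨hLw, -, hcard⟩ := mem_firingAt.1 hw
  refine ⟨w, hLw, hwb, le_trans (card_le_card fun u hu => ?_) hcard⟩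
  simp only [mem_filter, mem_univ, true_and] at hu
  refine mem_unprotectedNeighbors.2 ⟨by simpa [hu.2] using hwb, fun huk => hbk ?_⟩
  exact mem_protectedAt_of_fst_eq hu.1 hb hu.2 huk

lemma card_le_sum_add_two (hL : DedSuccessful (completeMultipartiteGraph V) L) :
    Fintype.card (Σ i, V i) ≤ ∑ u, L u + 2 := by
  by_cases hU : ∃ u, L u = 0
  · obtain ⟨v, -, -, hA⟩ := exists_fireable_of_dedSuccessful hL hU
    by_cases hB : ∃ b, L b = 0 ∧ b.1 = v.1
    · obtain ⟨b, hb, hbv⟩ := hB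
      obtain ⟨w, -, hwb, hB⟩ := card_unoccupied_part_le hL hb
      rw [hbv] at hwb hB
      have hvw : v ≠ w := by rintro rfl; exact hwb rfl
      have := Fintype.card_le_sum_add_card L {v, w}
        (by rw [sum_pair hvw, card_unoccupied_eq v.1]; omega)
      rwa [card_pair hvw] at this
    · simp only [not_exists, not_and] at hB
      have := card_le_sum_add_one_of_fireable hA hB
      omega
  · simp only [not_exists] at hU
    exact (Fintype.card_le_sum_add_card L ∅ (by simp [hU])).trans (by simp)

lemma card_le_sum_add_one (hL : DedSuccessful (completeMultipartiteGraph V) L)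
    (hV : (∀ i, Subsingleton (V i)) ∨ (Fintype.card ι ≤ 2 ∧ ∃ j, Subsingleton (V j))) :
    Fintype.card (Σ i, V i) ≤ ∑ u, L u + 1 := by
  by_cases hU : ∃ u, L u = 0
  · obtain ⟨v, hv, ⟨a, ha⟩, hA⟩ := exists_fireable_of_dedSuccessful hL hU
    simp only [mem_filter, mem_univ, true_and] at ha
    refine card_le_sum_add_one_of_fireable hA fun b hb hbv => ?_
    have hv' : ¬Subsingleton (V v.1) := fun hs =>
      ((Sigma.eq_of_fst_eq_of_subsingleton hbv.symm hs) ▸ hv).ne' hb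
    rcases hV with hV | ⟨hι, j, hj⟩
    · exact hv' (hV v.1)
    obtain ⟨w, hw, hwb, -⟩ := card_unoccupied_part_le hL hb
    have hjv : j ≠ v.1 := fun h => hv' (h ▸ hj)
    have haj : a.1 = j := Fintype.eq_of_ne_of_ne_of_card_le_two hι ha.2 hjv
    have hwj : w.1 = j := Fintype.eq_of_ne_of_ne_of_card_le_two hι (hbv ▸ hwb) hjv
    have haw : a = w := Sigma.eq_of_fst_eq_of_subsingleton (haj.trans hwj.symm) (haj ▸ hj)
    exact (haw ▸ hw).ne' ha.1
  · simp only [not_exists] at hU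
    exact (Fintype.card_le_sum_add_card L ∅ (by simp [hU])).trans (by simp)

lemma exists_dedSuccessful_sum_eq_card_sub_one {j : ι} [Subsingleton (V j)] (z : V j)
    (hcard : 1 < Fintype.card (Σ i, V i)) :
    ∃ L : (Σ i, V i) → ℕ, ∑ u, L u = Fintype.card (Σ i, V i) - 1 ∧
      DedSuccessful (completeMultipartiteGraph V) L := by
  refine ⟨_, by simp [sum_pi_single'],
    dedSuccessful_pi_single ⟨j, z⟩ (fun u hu huv => ?_) hcard⟩
  exact hu (Sigma.eq_of_fst_eq_of_subsingleton huv.symm (huv ▸ inferInstance))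

lemma exists_dedSuccessful_sum_eq_card_sub_two [∀ i, Nonempty (V i)]
    (hι : 2 ≤ Fintype.card ι)
    (hV : ¬((∀ i, Fintype.card (V i) = 1) ∨
      (Fintype.card ι = 2 ∧ ∃ i, Fintype.card (V i) = 1))) :
    ∃ L : (Σ i, V i) → ℕ, ∑ u, L u = Fintype.card (Σ i, V i) - 2 ∧
      DedSuccessful (completeMultipartiteGraph V) L := by
  simp only [not_or, not_forall, not_and, not_exists] at hV
  obtain ⟨⟨p, hp⟩, hι2⟩ := hV
  obtain ⟨a, c, hac⟩ := Fintype.exists_pair_of_one_lt_card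
    (lt_of_le_of_ne Fintype.card_pos (Ne.symm hp))
  have : Nontrivial ι := Fintype.one_lt_card_iff_nontrivial.1 hι
  obtain ⟨q, hqp⟩ := exists_ne p
  let b : V q := Classical.arbitrary _
  obtain ⟨d, hdp, hdb⟩ : ∃ d : Σ i, V i, d.1 ≠ p ∧ d ≠ ⟨q, b⟩ := by
    by_cases hq : 1 < Fintype.card (V q)
    · obtain ⟨b', hb'⟩ := Fintype.exists_ne_of_one_lt_card hq b
      exact ⟨⟨q, b'⟩, hqp, fun h => hb' (eq_of_heq (Sigma.mk.inj_iff.1 h).2)⟩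
    · have hι3 : 2 < Fintype.card ι := lt_of_le_of_ne hι fun h =>
        hι2 h.symm q (by have := Fintype.card_pos (α := V q); omega)
      obtain ⟨r, -, hr⟩ := exists_mem_notMem_of_card_lt_card (s := {p, q})
        (card_le_two.trans_lt (by rwa [card_univ]))
      simp only [mem_insert, mem_singleton, not_or] at hr
      exact ⟨⟨r, Classical.arbitrary _⟩, hr.1, fun h => hr.2 (Sigma.mk.inj_iff.1 h).1⟩
  refine ⟨_, Fintype.sum_ite_eq_card_sub_two (a := ⟨p, a⟩) (b := ⟨q, b⟩) ?_,
    dedSuccessful_of_two_unoccupied (c := ⟨p, c⟩) (d := d) ?_ ?_ ?_ ?_ hdb⟩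
  · simp [hqp.symm]
  · simp [hqp.symm]
  · simp
  · simpa using hac.symm
  · simpa using hdp

end CompleteMultipartite

theorem deductionNumber_completeMultipartiteGraph {ι : Type*} {V : ι → Type*} [Fintype ι]
    [∀ i, Fintype (V i)] [∀ i, Nonempty (V i)] (hι : 2 ≤ Fintype.card ι) :
    deductionNumber (completeMultipartiteGraph V) =
      if (∀ i, Fintype.card (V i) = 1) ∨ (Fintype.card ι = 2 ∧ ∃ i, Fintype.card (V i) = 1)
      then Fintype.card (Σ i, V i) - 1 else Fintype.card (Σ i, V i) - 2 := by
  classical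
  have hsub : ∀ i, Fintype.card (V i) = 1 → Subsingleton (V i) := fun i h =>
    Fintype.card_le_one_iff_subsingleton.1 h.le
  split_ifs with hV
  · obtain ⟨j, hj⟩ : ∃ j, Fintype.card (V j) = 1 := hV.elim
      (fun h => ⟨(Fintype.card_pos_iff.1 (by omega)).some, h _⟩) And.right
    have hcard : 1 < Fintype.card (Σ i, V i) :=
      calc 1 < ∑ _ : ι, 1 := by simp; omega
        _ ≤ _ := by rw [Fintype.card_sigma]; exact sum_le_sum fun i _ => Fintype.card_pos
    have := hsub j hj
    refine deductionNumber_eq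
      (exists_dedSuccessful_sum_eq_card_sub_one (Classical.arbitrary (V j)) hcard) fun L hL => ?_
    have := card_le_sum_add_one hL <| hV.imp (fun h i => hsub i (h i))
      fun h => ⟨h.1.le, h.2.imp hsub⟩
    omega
  · obtain ⟨L₀, hsum, hL₀⟩ := exists_dedSuccessful_sum_eq_card_sub_two hι hV
    exact deductionNumber_eq ⟨L₀, hsum, hL₀⟩ fun L hL => by
      have := card_le_sum_add_two hL
      omega

end Deduction

theorem deduction_completeMultipartite (m : ℕ) (hm : 2 ≤ m) (n : Fin m → ℕ)
    (hn : ∀ i, 1 ≤ n i) :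
    deductionNumber (SimpleGraph.completeMultipartiteGraph (fun i : Fin m => Fin (n i))) =
      if (∀ i, n i = 1) ∨ (m = 2 ∧ ∃ i, n i = 1) then (∑ i, n i) - 1
      else (∑ i, n i) - 2 := by
  have : ∀ i, Nonempty (Fin (n i)) := fun i => Fin.pos_iff_nonempty.1 (hn i)
  simpa using Deduction.deductionNumber_completeMultipartiteGraph (V := fun i => Fin (n i))
    (by simpa using hm)
end

section
/- For graphs G and H, d(G □ H) ≤ min{|V(G)| · d(H), |V(H)| · d(G)}, where G □ H denotes the Cartesian product of G and H. -/
open Finset SimpleGraph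

lemma ded_protect_subset {V : Type*} [Fintype V] [DecidableEq V] (G : SimpleGraph V)
    [DecidableRel G.Adj] (L : V → ℕ) (k : ℕ) :
    (univ.filter fun v => 0 < L v) ⊆
      ((dedStep G L)^[k] (univ.filter (fun v => 0 < L v), ∅)).1 := by
  induction k with
  | zero => simp
  | succ k ih =>
    rw [Function.iterate_succ_apply']
    exact ih.trans Finset.subset_union_left

lemma step_prod_right {α β : Type*} [Fintype α] [Fintype β] [DecidableEq α] [DecidableEq β]
    (G : SimpleGraph α) (H : SimpleGraph β) [DecidableRel G.Adj] [DecidableRel H.Adj]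
    [DecidableEq (α × β)] [DecidableRel (G.boxProd H).Adj]
    (L : β → ℕ) (P F : Finset β) (hP : (univ.filter fun b => 0 < L b) ⊆ P) :
    dedStep (G.boxProd H) (fun p => L p.2) (univ ×ˢ P, univ ×ˢ F) =
      (univ ×ˢ (dedStep H L (P, F)).1, univ ×ˢ (dedStep H L (P, F)).2) := by
  have hmem : ∀ b, 0 < L b → b ∈ P := fun b hb => hP (by simpa using hb)
  have hN : ∀ (a : α) (b : β), b ∈ P →
      (univ.filter (fun u : α × β => (G.boxProd H).Adj (a, b) u ∧ u ∉ univ ×ˢ P)) =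
        {a} ×ˢ (univ.filter fun u => H.Adj b u ∧ u ∉ P) := by
    intro a b hb
    ext ⟨a', b'⟩
    constructor
    · intro h
      obtain ⟨hadj, hnp⟩ := (mem_filter.1 h).2
      have hb' : b' ∉ P := fun hh => hnp (mem_product.2 ⟨mem_univ _, hh⟩)
      have hadj' : (G.Adj a a' ∧ b = b') ∨ (H.Adj b b' ∧ a = a') := boxProd_adj.1 hadj
      rcases hadj' with ⟨hG, he⟩ | ⟨hH, he⟩
      · exact absurd (he ▸ hb) hb'
      · exact mem_product.2 ⟨mem_singleton.2 he.symm,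
          mem_filter.2 ⟨mem_univ _, hH, hb'⟩⟩
    · intro h
      obtain ⟨ha, hb'⟩ := mem_product.1 h
      obtain ⟨-, hH, hnp⟩ := mem_filter.1 hb'
      exact mem_filter.2 ⟨mem_univ _,
        boxProd_adj.2 (show (G.Adj a a' ∧ b = b') ∨ (H.Adj b b' ∧ a = a') from
          Or.inr ⟨hH, (mem_singleton.1 ha).symm⟩),
        fun hh => hnp (mem_product.1 hh).2⟩
  have hcard : ∀ (a : α) (b : β), b ∈ P →
      (univ.filter (fun u : α × β => (G.boxProd H).Adj (a, b) u ∧ u ∉ univ ×ˢ P)).card =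
        (univ.filter fun u => H.Adj b u ∧ u ∉ P).card := by
    intro a b hb
    rw [hN a b hb, Finset.card_product, Finset.card_singleton, one_mul]
  set fireH : Finset β := univ.filter (fun b =>
    0 < L b ∧ b ∉ F ∧ (univ.filter fun u => H.Adj b u ∧ u ∉ P).card ≤ L b) with hfireH
  have hfire : (univ.filter (fun p : α × β =>
      0 < L p.2 ∧ p ∉ univ ×ˢ F ∧
        (univ.filter (fun u => (G.boxProd H).Adj p u ∧ u ∉ univ ×ˢ P)).card ≤ L p.2)) =
      univ ×ˢ fireH := by
    ext ⟨a, b⟩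
    constructor
    · intro h
      obtain ⟨h1, h2, h3⟩ := (mem_filter.1 h).2
      rw [hcard a b (hmem b h1)] at h3
      exact mem_product.2 ⟨mem_univ _, mem_filter.2 ⟨mem_univ _, h1,
        fun hh => h2 (mem_product.2 ⟨mem_univ _, hh⟩), h3⟩⟩
    · intro h
      obtain ⟨-, hb⟩ := mem_product.1 h
      obtain ⟨-, h1, h2, h3⟩ := mem_filter.1 hb
      refine mem_filter.2 ⟨mem_univ _, h1, fun hh => h2 (mem_product.1 hh).2, ?_⟩
      rw [hcard a b (hmem b h1)]
      exact h3
  have hfiremem : ∀ b ∈ fireH, 0 < L b := by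
    intro b hb; exact (mem_filter.1 hb).2.1
  show (univ ×ˢ P ∪ _, univ ×ˢ F ∪ _) = _
  simp only [dedStep, hfire]
  refine Prod.ext ?_ ?_
  · show univ ×ˢ P ∪ (univ ×ˢ fireH).biUnion _ = univ ×ˢ (P ∪ fireH.biUnion _)
    ext ⟨a, b'⟩
    rw [mem_union, mem_product, mem_product, mem_union, mem_biUnion]
    simp only [mem_univ, true_and]
    constructor
    · rintro (h | ⟨⟨a₀, b₀⟩, hp, hm⟩)
      · exact Or.inl h
      · obtain ⟨-, hb₀⟩ := mem_product.1 hp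
        rw [hN a₀ b₀ (hmem b₀ (hfiremem b₀ hb₀))] at hm
        obtain ⟨-, hm⟩ := mem_product.1 hm
        exact Or.inr (mem_biUnion.2 ⟨b₀, hb₀, hm⟩)
    · rintro (h | h)
      · exact Or.inl h
      · obtain ⟨b₀, hb₀, hm⟩ := mem_biUnion.1 h
        refine Or.inr ⟨(a, b₀), mem_product.2 ⟨mem_univ _, hb₀⟩, ?_⟩
        rw [hN a b₀ (hmem b₀ (hfiremem b₀ hb₀))]
        exact mem_product.2 ⟨mem_singleton.2 rfl, hm⟩
  · show univ ×ˢ F ∪ univ ×ˢ fireH = univ ×ˢ (F ∪ fireH)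
    ext ⟨a, b⟩
    rw [mem_union, mem_product, mem_product, mem_product, mem_union]
    simp only [mem_univ, true_and]

lemma success_prod_right {α β : Type*} [Fintype α] [Fintype β] [DecidableEq α] [DecidableEq β]
    (G : SimpleGraph α) (H : SimpleGraph β) [DecidableRel G.Adj] [DecidableRel H.Adj]
    [DecidableEq (α × β)] [DecidableRel (G.boxProd H).Adj]
    (L : β → ℕ) (h : DedSuccessful H L) :
    DedSuccessful (G.boxProd H) (fun p => L p.2) := by
  have hiter : ∀ k : ℕ,
      (dedStep (G.boxProd H) (fun p => L p.2))^[k]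
          (univ.filter (fun p => 0 < L p.2), ∅) =
        (univ ×ˢ ((dedStep H L)^[k] (univ.filter (fun b => 0 < L b), ∅)).1,
         univ ×ˢ ((dedStep H L)^[k] (univ.filter (fun b => 0 < L b), ∅)).2) := by
    intro k
    induction k with
    | zero =>
      simp only [Function.iterate_zero, id_eq]
      refine Prod.ext ?_ ?_
      · ext ⟨a, b⟩
        simp [mem_product]
      · simp [Finset.product_empty]
    | succ k ih =>
      rw [Function.iterate_succ_apply', Function.iterate_succ_apply', ih]
      exact step_prod_right G H L _ _ (ded_protect_subset H L k)
  obtain ⟨k, hk⟩ := h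
  exact ⟨k, by rw [hiter k, hk]; exact Finset.univ_product_univ⟩

lemma step_prod_left {α β : Type*} [Fintype α] [Fintype β] [DecidableEq α] [DecidableEq β]
    (G : SimpleGraph α) (H : SimpleGraph β) [DecidableRel G.Adj] [DecidableRel H.Adj]
    [DecidableEq (α × β)] [DecidableRel (G.boxProd H).Adj]
    (L : α → ℕ) (P F : Finset α) (hP : (univ.filter fun a => 0 < L a) ⊆ P) :
    dedStep (G.boxProd H) (fun p => L p.1) (P ×ˢ univ, F ×ˢ univ) =
      ((dedStep G L (P, F)).1 ×ˢ univ, (dedStep G L (P, F)).2 ×ˢ univ) := by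
  have hmem : ∀ a, 0 < L a → a ∈ P := fun a ha => hP (by simpa using ha)
  have hN : ∀ (a : α) (b : β), a ∈ P →
      (univ.filter (fun u : α × β => (G.boxProd H).Adj (a, b) u ∧ u ∉ P ×ˢ univ)) =
        (univ.filter fun u => G.Adj a u ∧ u ∉ P) ×ˢ {b} := by
    intro a b ha
    ext ⟨a', b'⟩
    constructor
    · intro h
      obtain ⟨hadj, hnp⟩ := (mem_filter.1 h).2
      have ha' : a' ∉ P := fun hh => hnp (mem_product.2 ⟨hh, mem_univ _⟩)
      have hadj' : (G.Adj a a' ∧ b = b') ∨ (H.Adj b b' ∧ a = a') := boxProd_adj.1 hadj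
      rcases hadj' with ⟨hG, he⟩ | ⟨hH, he⟩
      · exact mem_product.2 ⟨mem_filter.2 ⟨mem_univ _, hG, ha'⟩, mem_singleton.2 he.symm⟩
      · exact absurd (he ▸ ha) ha'
    · intro h
      obtain ⟨ha', hb'⟩ := mem_product.1 h
      obtain ⟨-, hG, hnp⟩ := mem_filter.1 ha'
      exact mem_filter.2 ⟨mem_univ _,
        boxProd_adj.2 (show (G.Adj a a' ∧ b = b') ∨ (H.Adj b b' ∧ a = a') from
          Or.inl ⟨hG, (mem_singleton.1 hb').symm⟩),
        fun hh => hnp (mem_product.1 hh).1⟩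
  have hcard : ∀ (a : α) (b : β), a ∈ P →
      (univ.filter (fun u : α × β => (G.boxProd H).Adj (a, b) u ∧ u ∉ P ×ˢ univ)).card =
        (univ.filter fun u => G.Adj a u ∧ u ∉ P).card := by
    intro a b ha
    rw [hN a b ha, Finset.card_product, Finset.card_singleton, mul_one]
  set fireG : Finset α := univ.filter (fun a =>
    0 < L a ∧ a ∉ F ∧ (univ.filter fun u => G.Adj a u ∧ u ∉ P).card ≤ L a) with hfireG
  have hfire : (univ.filter (fun p : α × β =>
      0 < L p.1 ∧ p ∉ F ×ˢ univ ∧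
        (univ.filter (fun u => (G.boxProd H).Adj p u ∧ u ∉ P ×ˢ univ)).card ≤ L p.1)) =
      fireG ×ˢ univ := by
    ext ⟨a, b⟩
    constructor
    · intro h
      obtain ⟨h1, h2, h3⟩ := (mem_filter.1 h).2
      rw [hcard a b (hmem a h1)] at h3
      exact mem_product.2 ⟨mem_filter.2 ⟨mem_univ _, h1,
        fun hh => h2 (mem_product.2 ⟨hh, mem_univ _⟩), h3⟩, mem_univ _⟩
    · intro h
      obtain ⟨ha, -⟩ := mem_product.1 h
      obtain ⟨-, h1, h2, h3⟩ := mem_filter.1 ha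
      refine mem_filter.2 ⟨mem_univ _, h1, fun hh => h2 (mem_product.1 hh).1, ?_⟩
      rw [hcard a b (hmem a h1)]
      exact h3
  have hfiremem : ∀ a ∈ fireG, 0 < L a := by
    intro a ha; exact (mem_filter.1 ha).2.1
  show (P ×ˢ univ ∪ _, F ×ˢ univ ∪ _) = _
  simp only [dedStep, hfire]
  refine Prod.ext ?_ ?_
  · show P ×ˢ univ ∪ (fireG ×ˢ univ).biUnion _ = (P ∪ fireG.biUnion _) ×ˢ univ
    ext ⟨a', b⟩
    rw [mem_union, mem_product, mem_product, mem_union, mem_biUnion]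
    simp only [mem_univ, and_true]
    constructor
    · rintro (h | ⟨⟨a₀, b₀⟩, hp, hm⟩)
      · exact Or.inl h
      · obtain ⟨ha₀, -⟩ := mem_product.1 hp
        rw [hN a₀ b₀ (hmem a₀ (hfiremem a₀ ha₀))] at hm
        obtain ⟨hm, -⟩ := mem_product.1 hm
        exact Or.inr (mem_biUnion.2 ⟨a₀, ha₀, hm⟩)
    · rintro (h | h)
      · exact Or.inl h
      · obtain ⟨a₀, ha₀, hm⟩ := mem_biUnion.1 h
        refine Or.inr ⟨(a₀, b), mem_product.2 ⟨ha₀, mem_univ _⟩, ?_⟩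
        rw [hN a₀ b (hmem a₀ (hfiremem a₀ ha₀))]
        exact mem_product.2 ⟨hm, mem_singleton.2 rfl⟩
  · show F ×ˢ univ ∪ fireG ×ˢ univ = (F ∪ fireG) ×ˢ univ
    ext ⟨a, b⟩
    rw [mem_union, mem_product, mem_product, mem_product, mem_union]
    simp only [mem_univ, and_true]

lemma success_prod_left {α β : Type*} [Fintype α] [Fintype β] [DecidableEq α] [DecidableEq β]
    (G : SimpleGraph α) (H : SimpleGraph β) [DecidableRel G.Adj] [DecidableRel H.Adj]
    [DecidableEq (α × β)] [DecidableRel (G.boxProd H).Adj]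
    (L : α → ℕ) (h : DedSuccessful G L) :
    DedSuccessful (G.boxProd H) (fun p => L p.1) := by
  have hiter : ∀ k : ℕ,
      (dedStep (G.boxProd H) (fun p => L p.1))^[k]
          (univ.filter (fun p => 0 < L p.1), ∅) =
        (((dedStep G L)^[k] (univ.filter (fun a => 0 < L a), ∅)).1 ×ˢ univ,
         ((dedStep G L)^[k] (univ.filter (fun a => 0 < L a), ∅)).2 ×ˢ univ) := by
    intro k
    induction k with
    | zero =>
      simp only [Function.iterate_zero, id_eq]
      refine Prod.ext ?_ ?_
      · ext ⟨a, b⟩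
        simp [mem_product]
      · simp [Finset.empty_product]
    | succ k ih =>
      rw [Function.iterate_succ_apply', Function.iterate_succ_apply', ih]
      exact step_prod_left G H L _ _ (ded_protect_subset G L k)
  obtain ⟨k, hk⟩ := h
  exact ⟨k, by rw [hiter k, hk]; exact Finset.univ_product_univ⟩

lemma deductionNumber_le {V : Type*} [Fintype V] (G : SimpleGraph V) {n : ℕ}
    (h : ∃ L : V → ℕ, (∑ v, L v) = n ∧
      @DedSuccessful V _ (Classical.decEq V) G (Classical.decRel G.Adj) L) :
    deductionNumber G ≤ n :=
  Nat.sInf_le h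

lemma deductionNumber_spec {V : Type*} [Fintype V] (G : SimpleGraph V) :
    ∃ L : V → ℕ, (∑ v, L v) = deductionNumber G ∧
      @DedSuccessful V _ (Classical.decEq V) G (Classical.decRel G.Adj) L := by
  have hne : {n | ∃ L : V → ℕ, (∑ v, L v) = n ∧
      @DedSuccessful V _ (Classical.decEq V) G (Classical.decRel G.Adj) L}.Nonempty :=
    ⟨Fintype.card V, fun _ => 1, by simp, 0, by simp [DedSuccessful]⟩
  exact Nat.sInf_mem hne

theorem deduction_boxProd_le {α β : Type*} [Fintype α] [Fintype β]
    (G : SimpleGraph α) (H : SimpleGraph β) :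
    deductionNumber (G.boxProd H) ≤
      min (Fintype.card α * deductionNumber H) (Fintype.card β * deductionNumber G) := by
  refine le_min ?_ ?_
  · obtain ⟨L, hsum, hs⟩ := deductionNumber_spec H
    refine deductionNumber_le _ ⟨fun p => L p.2, ?_,
      @success_prod_right α β _ _ (Classical.decEq α) (Classical.decEq β) G H
        (Classical.decRel _) (Classical.decRel _) (Classical.decEq _) (Classical.decRel _)
        L hs⟩
    rw [Fintype.sum_prod_type, ← hsum]
    simp [Finset.sum_const, mul_comm]
  · obtain ⟨L, hsum, hs⟩ := deductionNumber_spec G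
    refine deductionNumber_le _ ⟨fun p => L p.1, ?_,
      @success_prod_left α β _ _ (Classical.decEq α) (Classical.decEq β) G H
        (Classical.decRel _) (Classical.decRel _) (Classical.decEq _) (Classical.decRel _)
        L hs⟩
    rw [Fintype.sum_prod_type, ← hsum]
    simp [Finset.sum_const, mul_comm, Finset.sum_mul]
end
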